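/- arXiv:1103.0067 — 8 statements merged into one kernel-verified Lean document; each statement's English description precedes it below -/
import Mathlib

section
/- If G is a C_k-semisaturated graph on n ≥ k vertices with k ≥ 5, and x₁, x₂ are distinct vertices of degree 1 in G, then their (unique) neighbors are distinct. -/
open SimpleGraph

/-- `G` contains a cycle of length `k`. -/
def hasCycleLength {V : Type*} (G : SimpleGraph V) (k : ℕ) : Prop :=
  ∃ (v : V) (c : G.Walk v v), c.IsCycle ∧ c.length = k

/-- The graph `G` together with the extra edge `uv`. -/
def addEdge {V : Type*} (G : SimpleGraph V) (u v : V) : SimpleGraph V :=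
  G ⊔ SimpleGraph.fromEdgeSet {s(u, v)}

/-- `G` is `C_k`-semisaturated: adding any non-edge `uv` creates a new `k`-cycle,
i.e. a `k`-cycle through the edge `uv`. -/
def IsCkSemisaturated {V : Type*} (k : ℕ) (G : SimpleGraph V) : Prop :=
  ∀ u v : V, u ≠ v → ¬ G.Adj u v →
    ∃ (w : V) (c : (addEdge G u v).Walk w w),
      c.IsCycle ∧ c.length = k ∧ s(u, v) ∈ c.edges

/-- `G` is `C_k`-saturated: it has no `k`-cycle, but adding any non-edge creates one. -/
def IsCkSaturated {V : Type*} (k : ℕ) (G : SimpleGraph V) : Prop :=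
  ¬ hasCycleLength G k ∧
    ∀ u v : V, u ≠ v → ¬ G.Adj u v → hasCycleLength (addEdge G u v) k

/-!
If the two leaves `x₁, x₂` had the same neighbour `y`, then in `G + x₁x₂` both `x₁` and `x₂`
would have all their neighbours in the triangle `x₁x₂y`. A cycle through `x₁` enters and leaves
`x₁` along its two distinct edges, so it uses `x₂` and `y`, and from `x₂` it can only continue to
`y`: the cycle is the triangle itself. Hence adding `x₁x₂` creates no `k`-cycle for `k ≠ 3`.
-/

namespace SimpleGraph

variable {V : Type*}

namespace Walk

variable {H : SimpleGraph V} {u v w : V}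

lemma IsCycle.length_eq_three_of_getVert_two_eq_penultimate {c : H.Walk u u} (hc : c.IsCycle)
    (h : c.getVert 2 = c.penultimate) : c.length = 3 := by
  have := hc.three_le_length
  have := hc.getVert_injOn (by simp; lia) (by simp; lia) h
  lia

lemma IsCycle.length_eq_three_of_neighborSet_subset {c : H.Walk u u} (hc : c.IsCycle)
    (hu : H.neighborSet u ⊆ {v, w}) (hv : H.neighborSet v ⊆ {u, w}) : c.length = 3 := by
  have hsnd : c.snd ∈ ({v, w} : Set V) := hu (c.adj_snd hc.not_nil)
  have hpen : c.penultimate ∈ ({v, w} : Set V) := hu (c.adj_penultimate hc.not_nil).symm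
  wlog hsnd_eq : c.snd = v generalizing c
  · have hpen_eq : c.penultimate = v := by
      have := hc.snd_ne_penultimate
      simp only [Set.mem_insert_iff, Set.mem_singleton_iff] at hsnd hpen
      grind
    simpa using this hc.reverse (by rwa [snd_reverse]) (by rwa [penultimate_reverse])
      (by rwa [snd_reverse])
  have hpen_eq : c.penultimate = w := by
    have := hc.snd_ne_penultimate
    simp only [Set.mem_insert_iff, Set.mem_singleton_iff] at hpen
    grind
  have hthird : c.getVert 2 ∈ ({u, w} : Set V) :=
    hv (hsnd_eq ▸ c.adj_getVert_succ (i := 1) (by have := hc.three_le_length; lia))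
  have hthird_ne : c.getVert 0 ≠ c.getVert 2 :=
    hc.getVert_sub_one_ne_getVert_add_one (i := 1) (by have := hc.three_le_length; lia)
  rw [getVert_zero] at hthird_ne
  simp only [Set.mem_insert_iff, Set.mem_singleton_iff] at hthird
  exact hc.length_eq_three_of_getVert_two_eq_penultimate
    (hpen_eq ▸ hthird.resolve_left hthird_ne.symm)

end Walk

lemma neighborSet_eq_singleton_of_degree_eq_one {G : SimpleGraph V} {x y : V}
    [Fintype (G.neighborSet x)] (hd : G.degree x = 1) (hxy : G.Adj x y) :
    G.neighborSet x = {y} := by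
  obtain ⟨z, -, hz⟩ := degree_eq_one_iff_existsUnique_adj.mp hd
  ext t
  simp only [mem_neighborSet, Set.mem_singleton_iff]
  exact ⟨fun ht => (hz t ht).trans (hz y hxy).symm, fun ht => ht ▸ hxy⟩

end SimpleGraph

lemma addEdge_comm {V : Type*} (G : SimpleGraph V) (u v : V) : addEdge G u v = addEdge G v u := by
  simp [addEdge, Sym2.eq_swap]

lemma neighborSet_addEdge_subset {V : Type*} (G : SimpleGraph V) (u v : V) :
    (addEdge G u v).neighborSet u ⊆ insert v (G.neighborSet u) := by
  intro z hz
  simp only [addEdge, mem_neighborSet, sup_adj, fromEdgeSet_adj, Set.mem_singleton_iff,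
    Sym2.eq_iff] at hz
  simp only [Set.mem_insert_iff, mem_neighborSet]
  grind

theorem stmt_0_general {V : Type*} [Fintype V] (G : SimpleGraph V) [DecidableRel G.Adj]
    (k : ℕ) (hk : 5 ≤ k)
    (hsat : IsCkSemisaturated k G)
    (x₁ x₂ y₁ y₂ : V) (hx : x₁ ≠ x₂)
    (hd1 : G.degree x₁ = 1) (hd2 : G.degree x₂ = 1)
    (hy1 : G.Adj x₁ y₁) (hy2 : G.Adj x₂ y₂) :
    y₁ ≠ y₂ := by
  classical
  rintro rfl
  have hN₁ := neighborSet_eq_singleton_of_degree_eq_one hd1 hy1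
  have hN₂ := neighborSet_eq_singleton_of_degree_eq_one hd2 hy2
  have hnadj : ¬ G.Adj x₁ x₂ := fun h =>
    G.ne_of_adj hy2 (by simpa [← mem_neighborSet, hN₁] using h)
  obtain ⟨_, c, hc, hlen, hedge⟩ := hsat x₁ x₂ hx hnadj
  have hx₁ : x₁ ∈ c.support := c.fst_mem_support_of_mem_edges hedge
  have hlen₃ := (hc.rotate hx₁).length_eq_three_of_neighborSet_subset
    (hN₁ ▸ neighborSet_addEdge_subset G x₁ x₂)
    (addEdge_comm G x₁ x₂ ▸ hN₂ ▸ neighborSet_addEdge_subset G x₂ x₁)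
  rw [Walk.length_rotate] at hlen₃
  lia

theorem stmt_0 {V : Type*} [Fintype V] (G : SimpleGraph V) [DecidableRel G.Adj]
    (n k : ℕ) (hn : Fintype.card V = n) (hkn : k ≤ n) (hk : 5 ≤ k)
    (hsat : IsCkSemisaturated k G)
    (x₁ x₂ y₁ y₂ : V) (hx : x₁ ≠ x₂)
    (hd1 : G.degree x₁ = 1) (hd2 : G.degree x₂ = 1)
    (hy1 : G.Adj x₁ y₁) (hy2 : G.Adj x₂ y₂) :
    y₁ ≠ y₂ :=
  stmt_0_general G k hk hsat x₁ x₂ y₁ y₂ hx hd1 hd2 hy1 hy2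
end

section
/- If G is a C_k-semisaturated graph on n ≥ k vertices with k ≥ 5, and x is a vertex of degree 1 in G with neighbor y, then y has degree at least 3 in G. -/
open SimpleGraph

/-!
Suppose `deg y ≤ 2`. Adding the edge `xz` for a third vertex `z` creates a cycle; at `x` it can
only continue to `y`, and at `y` it needs a second neighbour `w`, so `N(y) = {x, w}`. Now add
`xw`: on the new cycle `x` and `y` each have exactly two available neighbours, forcing the cycle to
be the triangle `xyw`, which contradicts `k ≥ 5`.
-/

namespace SimpleGraph

variable {V : Type*} {G : SimpleGraph V}

lemma neighborSet_eq_of_degree_le {v : V} [Fintype (G.neighborSet v)] {s : Finset V}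
    (hs : ∀ a ∈ s, G.Adj v a) (hd : G.degree v ≤ s.card) : G.neighborSet v = s := by
  rw [← coe_neighborFinset, Finset.coe_inj]
  exact (Finset.eq_of_subset_of_card_le (fun a ha ↦ (G.mem_neighborFinset v a).2 (hs a ha))
    (by rwa [card_neighborFinset_eq_degree])).symm

namespace Walk

lemma mem_of_mem_support_of_edges_closed {u v a : V} {S : Set V} (p : G.Walk u v)
    (hS : ∀ b c, s(b, c) ∈ p.edges → b ∈ S → c ∈ S) (ha : a ∈ p.support) (haS : a ∈ S) :
    ∀ t ∈ p.support, t ∈ S := by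
  induction p generalizing a with
  | nil =>
    simp only [support_nil, List.mem_singleton] at ha ⊢
    rintro t rfl
    rwa [← ha]
  | @cons u w _ huw q ih =>
    have hq : ∀ b c, s(b, c) ∈ q.edges → b ∈ S → c ∈ S :=
      fun b c h ↦ hS b c (List.mem_cons_of_mem _ h)
    have hwS : w ∈ S := by
      rcases (support_cons huw q ▸ List.mem_cons).1 ha with rfl | ha
      · exact hS _ _ List.mem_cons_self haS
      · exact ih hq ha haS w q.start_mem_support
    intro t ht
    rcases (support_cons huw q ▸ List.mem_cons).1 ht with rfl | ht
    · exact hS w t (by simp [Sym2.eq_swap]) hwS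
    · exact ih hq q.start_mem_support hwS t ht

namespace IsCycle

variable {u : V} {c : G.Walk u u}

lemma exists_toSubgraph_adj_ne (hc : c.IsCycle) {v : V} (hv : v ∈ c.support) (a : V) :
    ∃ b ≠ a, c.toSubgraph.Adj v b := by
  obtain ⟨b, hb, hba⟩ :=
    Set.exists_ne_of_one_lt_ncard (by rw [hc.ncard_neighborSet_toSubgraph_eq_two hv]; norm_num) a
  exact ⟨b, hba, hb⟩

lemma neighborSet_toSubgraph_eq_of_subset (hc : c.IsCycle) {v a b : V} (hv : v ∈ c.support)
    (h : G.neighborSet v ⊆ {a, b}) : c.toSubgraph.neighborSet v = {a, b} :=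
  Set.eq_of_subset_of_ncard_le (fun _ hw ↦ h (Subgraph.Adj.adj_sub hw))
    (by
      rw [hc.ncard_neighborSet_toSubgraph_eq_two hv]
      exact (Set.ncard_insert_le a {b}).trans (by simp))

lemma neighborSet_toSubgraph_eq_pair (hc : c.IsCycle) {v a b : V} (hab : a ≠ b)
    (ha : c.toSubgraph.Adj v a) (hb : c.toSubgraph.Adj v b) :
    c.toSubgraph.neighborSet v = {a, b} := by
  have hv := mem_support_of_adj_toSubgraph ha
  refine (Set.eq_of_subset_of_ncard_le ?_ ?_ ?_).symm
  · rintro w (rfl | rfl) <;> assumption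
  · rw [hc.ncard_neighborSet_toSubgraph_eq_two hv, Set.ncard_pair hab]
  · exact Set.finite_of_ncard_pos (by rw [hc.ncard_neighborSet_toSubgraph_eq_two hv]; norm_num)

/-- Each vertex of a triangle already has its two cycle-neighbours inside the triangle, so by
connectedness the cycle cannot leave it. -/
lemma length_eq_three_of_toSubgraph_adj (hc : c.IsCycle) {x y w : V}
    (hxy : c.toSubgraph.Adj x y) (hyw : c.toSubgraph.Adj y w) (hwx : c.toSubgraph.Adj w x) :
    c.length = 3 := by
  have hclosed :
      ∀ a b, s(a, b) ∈ c.edges → a ∈ ({x, y, w} : Set V) → b ∈ ({x, y, w} : Set V) := by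
    intro a b hab ha
    have hab := adj_toSubgraph_iff_mem_edges.2 hab
    rcases ha with rfl | rfl | rfl
    · rw [← Subgraph.mem_neighborSet,
        hc.neighborSet_toSubgraph_eq_pair (Subgraph.Adj.ne hyw) hxy hwx.symm] at hab
      grind
    · rw [← Subgraph.mem_neighborSet,
        hc.neighborSet_toSubgraph_eq_pair (Subgraph.Adj.ne hwx).symm hxy.symm hyw] at hab
      grind
    · rw [← Subgraph.mem_neighborSet,
        hc.neighborSet_toSubgraph_eq_pair (Subgraph.Adj.ne hxy) hwx hyw.symm] at hab
      grind
  have hsub : c.support.tail ⊆ [x, y, w] := fun t ht ↦ by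
    simpa using c.mem_of_mem_support_of_edges_closed hclosed
      (mem_support_of_adj_toSubgraph hxy) (Set.mem_insert x _) t (List.mem_of_mem_tail ht)
  have hle := (hc.support_nodup.subperm hsub).length_le
  rw [List.length_tail, length_support] at hle
  have := hc.three_le_length
  simp only [List.length_cons, List.length_nil] at hle
  omega

end IsCycle

end Walk

lemma addEdge_adj {u v a b : V} :
    (addEdge G u v).Adj a b ↔ G.Adj a b ∨ (s(a, b) = s(u, v) ∧ a ≠ b) := by
  simp [addEdge, fromEdgeSet_adj]

lemma neighborSet_addEdge_left {u v : V} (huv : u ≠ v) :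
    (addEdge G u v).neighborSet u = insert v (G.neighborSet u) := by
  ext a
  simp only [mem_neighborSet, addEdge_adj, Set.mem_insert_iff]
  grind

lemma neighborSet_addEdge_of_ne {u v a : V} (hau : a ≠ u) (hav : a ≠ v) :
    (addEdge G u v).neighborSet a = G.neighborSet a := by
  ext b
  simp only [mem_neighborSet, addEdge_adj]
  grind

end SimpleGraph

namespace IsCkSemisaturated

variable {V : Type*} {G : SimpleGraph V} {k : ℕ}

lemma exists_adj_ne_of_neighborSet_eq_singleton (hsat : IsCkSemisaturated k G) {x y z : V}
    (hx : G.neighborSet x = {y}) (hzx : z ≠ x) (hzy : z ≠ y) : ∃ w ≠ x, G.Adj y w := by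
  have hxz : ¬ G.Adj x z := by rw [← mem_neighborSet, hx]; exact hzy
  obtain ⟨_, c, hc, -, hxzc⟩ := hsat x z hzx.symm hxz
  have hcx : c.toSubgraph.neighborSet x = {z, y} :=
    hc.neighborSet_toSubgraph_eq_of_subset (c.fst_mem_support_of_mem_edges hxzc)
      (by rw [neighborSet_addEdge_left hzx.symm, hx])
  have hxy : c.toSubgraph.Adj x y := by rw [← Subgraph.mem_neighborSet, hcx]; simp
  obtain ⟨w, hwx, hyw⟩ :=
    hc.exists_toSubgraph_adj_ne (Walk.mem_support_of_adj_toSubgraph hxy.symm) x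
  have hyw : w ∈ (addEdge G x z).neighborSet y := hyw.adj_sub
  rw [neighborSet_addEdge_of_ne (Subgraph.Adj.ne hxy).symm hzy.symm] at hyw
  exact ⟨w, hwx, hyw⟩

lemma eq_three_of_neighborSet_eq (hsat : IsCkSemisaturated k G) {x y w : V}
    (hx : G.neighborSet x = {y}) (hy : G.neighborSet y = {x, w}) (hwx : w ≠ x) : k = 3 := by
  have hyw : G.Adj y w := by rw [← mem_neighborSet, hy]; simp
  have hxw : ¬ G.Adj x w := by rw [← mem_neighborSet, hx]; exact hyw.ne'
  obtain ⟨_, c, hc, rfl, hxwc⟩ := hsat x w hwx.symm hxw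
  have hcx : c.toSubgraph.neighborSet x = {w, y} :=
    hc.neighborSet_toSubgraph_eq_of_subset (c.fst_mem_support_of_mem_edges hxwc)
      (by rw [neighborSet_addEdge_left hwx.symm, hx])
  have hxyc : c.toSubgraph.Adj x y := by rw [← Subgraph.mem_neighborSet, hcx]; simp
  have hcy : c.toSubgraph.neighborSet y = {x, w} :=
    hc.neighborSet_toSubgraph_eq_of_subset (Walk.mem_support_of_adj_toSubgraph hxyc.symm)
      (by rw [neighborSet_addEdge_of_ne (Subgraph.Adj.ne hxyc).symm hyw.ne, hy])
  have hywc : c.toSubgraph.Adj y w := by rw [← Subgraph.mem_neighborSet, hcy]; simp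
  exact hc.length_eq_three_of_toSubgraph_adj hxyc hywc
    (Walk.adj_toSubgraph_iff_mem_edges.2 hxwc).symm

end IsCkSemisaturated

theorem stmt_1 {V : Type*} [Fintype V] (G : SimpleGraph V) [DecidableRel G.Adj]
    (n k : ℕ) (hn : Fintype.card V = n) (hkn : k ≤ n) (hk : 5 ≤ k)
    (hsat : IsCkSemisaturated k G)
    (x y : V) (hd : G.degree x = 1) (hxy : G.Adj x y) :
    3 ≤ G.degree y := by
  classical
  by_contra! hy
  have hx : G.neighborSet x = {y} := by
    simpa using neighborSet_eq_of_degree_le (s := {y}) (by simpa using hxy) (by simp [hd])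
  obtain ⟨z, -, hz⟩ := Finset.exists_mem_notMem_of_card_lt_card (s := {x, y})
    (t := Finset.univ) (by grind [Finset.card_le_two, Finset.card_univ])
  simp only [Finset.mem_insert, Finset.mem_singleton, not_or] at hz
  obtain ⟨w, hwx, hyw⟩ := hsat.exists_adj_ne_of_neighborSet_eq_singleton hx hz.1 hz.2
  have hNy : G.neighborSet y = {x, w} := by
    simpa using neighborSet_eq_of_degree_le (s := {x, w}) (by simp [hxy.symm, hyw])
      (by rw [Finset.card_pair hwx.symm]; omega)
  have := hsat.eq_three_of_neighborSet_eq hx hNy hwx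
  omega
end

section
/- If G is a C_k-semisaturated graph and x is a vertex of degree 1 in G, then the graph G − x (obtained by deleting x) is also C_k-semisaturated. -/
open SimpleGraph

/-!
A vertex on a cycle has two distinct neighbours on it. Since `x` is neither `u` nor `v`, adding
the edge `uv` does not change the neighbourhood of `x`, so a `k`-cycle through `uv` in `G + uv`
cannot pass through the degree-one vertex `x`; it therefore lives in `(G - x) + uv`.
-/

section

variable {V : Type*}

namespace SimpleGraph

lemma ncard_neighborSet_eq_degree (G : SimpleGraph V) (v : V) [Fintype (G.neighborSet v)] :
    (G.neighborSet v).ncard = G.degree v := by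
  rw [← card_neighborSet_eq_degree, Set.ncard_eq_toFinset_card', Set.toFinset_card]

variable {G : SimpleGraph V}

lemma Walk.IsCycle.two_le_ncard_neighborSet {u v : V} {p : G.Walk u u} (hp : p.IsCycle)
    (hv : v ∈ p.support) (hfin : (G.neighborSet v).Finite) : 2 ≤ (G.neighborSet v).ncard :=
  calc 2 = (p.toSubgraph.neighborSet v).ncard := (hp.ncard_neighborSet_toSubgraph_eq_two hv).symm
    _ ≤ (G.neighborSet v).ncard := Set.ncard_le_ncard (p.toSubgraph.neighborSet_subset v) hfin

lemma Walk.IsCycle.induce {s : Set V} {u : V} {p : G.Walk u u} (hp : p.IsCycle) (hs) :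
    (p.induce s hs).IsCycle := by
  rw [← isCycle_map_iff_of_injective (f := (Embedding.induce s).toHom) Subtype.val_injective,
    map_induce]
  exact hp

@[simp]
lemma Walk.length_induce {s : Set V} {u v : V} (p : G.Walk u v) (hs) :
    (p.induce s hs).length = p.length := by
  induction p <;> simp [*]

lemma Walk.mem_edges_induce {s : Set V} {u v : V} {p : G.Walk u v} (hs) {a b : s} :
    s(a, b) ∈ (p.induce s hs).edges ↔ s((a : V), (b : V)) ∈ p.edges := by
  induction p with
  | nil => simp
  | cons h p ih => simp [ih, Subtype.ext_iff]

end SimpleGraph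

lemma neighborSet_addEdge_of_ne (G : SimpleGraph V) {u v x : V} (hu : x ≠ u)
    (hv : x ≠ v) : (addEdge G u v).neighborSet x = G.neighborSet x := by
  ext y
  simp [addEdge, hu, hv]

lemma addEdge_induce (G : SimpleGraph V) (s : Set V) (u v : s) :
    addEdge (G.induce s) u v = (addEdge G u v).induce s := by
  ext a b
  simp [addEdge, Subtype.ext_iff]

end

theorem stmt_2 {V : Type*} [Fintype V] (G : SimpleGraph V) [DecidableRel G.Adj]
    (k : ℕ) (hsat : IsCkSemisaturated k G)
    (x : V) (hd : G.degree x = 1) :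
    IsCkSemisaturated k (G.induce {v : V | v ≠ x}) := by
  intro u v huv hadj
  obtain ⟨w, c, hc, hlen, huv_mem⟩ := hsat u v (Subtype.coe_injective.ne huv) hadj
  have hx : x ∉ c.support := fun hxc => by
    have h2 := hc.two_le_ncard_neighborSet hxc (Set.toFinite _)
    rw [neighborSet_addEdge_of_ne G (Ne.symm u.2) (Ne.symm v.2), G.ncard_neighborSet_eq_degree,
      hd] at h2
    omega
  have hs : ∀ y ∈ c.support, y ∈ {v : V | v ≠ x} := fun y hy hyx => hx (hyx ▸ hy)
  rw [addEdge_induce]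
  exact ⟨_, c.induce _ hs, hc.induce hs, by simpa using hlen, (Walk.mem_edges_induce hs).2 huv_mem⟩
end

section
/- If G is a C_k-saturated graph with k ≥ 5 and x, y, w form a path in G where x has degree 1 and y is its neighbor, then w has degree at least 3 in G. -/
/-!
Let `x` be a leaf with neighbour `y`, and suppose `w ~ y` has degree at most two. Adding a
non-edge `xt` (`t ≠ y`) to a `C_k`-saturated graph creates a `k`-cycle through `xt`, i.e. a
`t`–`x` path of length `k - 1`, which must end with the edge `yx`; so `G` has a `y`–`t` path of
length `k - 2`. If `w` is a leaf, take `t = w`: that path is the single edge `yw`, so `k = 3`.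
Otherwise `w` has exactly one further neighbour `z`; take `t = z`. If the `y`–`z` path passes
through `w`, it is `y w z` and `k = 4`; if not, closing it up through `w` gives a `k`-cycle in `G`.
-/

open SimpleGraph

namespace SimpleGraph

variable {V : Type*} {G : SimpleGraph V}

namespace Walk

theorem IsCycle.exists_isPath_of_snd_eq {u v : V} {c : G.Walk u u} (hc : c.IsCycle)
    (hv : c.snd = v) :
    ∃ p : G.Walk v u, p.IsPath ∧ p.length + 1 = c.length ∧ s(u, v) ∉ p.edges := by
  cases c with
  | nil => exact absurd hc not_isCycle_nil
  | cons h p =>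
    rw [snd_cons] at hv
    subst hv
    obtain ⟨hp, he⟩ := (cons_isCycle_iff p h).mp hc
    exact ⟨p, hp, rfl, he⟩

theorem IsCycle.exists_isPath_of_mem_edges {u v w : V} {c : G.Walk w w} (hc : c.IsCycle)
    (he : s(u, v) ∈ c.edges) :
    ∃ p : G.Walk v u, p.IsPath ∧ p.length + 1 = c.length ∧ s(u, v) ∉ p.edges := by
  classical
  have hu := c.fst_mem_support_of_mem_edges he
  have hc' := hc.rotate hu
  have hv : v ∈ (c.rotate u hu).toSubgraph.neighborSet u := by
    rw [Subgraph.mem_neighborSet, ← Subgraph.mem_edgeSet, mem_edges_toSubgraph,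
      (c.rotate_edges u hu).mem_iff]
    exact he
  rw [hc'.neighborSet_toSubgraph_endpoint] at hv
  rcases hv with hv | hv
  · simpa using hc'.exists_isPath_of_snd_eq hv.symm
  · simpa using hc'.reverse.exists_isPath_of_snd_eq (by rw [snd_reverse]; exact hv.symm)

theorem IsPath.length_eq_one_of_forall_adj {a b : V} {p : G.Walk a b} (hp : p.IsPath)
    (hab : a ≠ b) (hb : ∀ t, G.Adj b t → t = a) : p.length = 1 := by
  have hnil : ¬ p.Nil := fun h => hab h.eq
  have hpen : p.getVert (p.length - 1) = p.getVert 0 := by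
    rw [← penultimate, getVert_zero]
    exact hb _ (p.adj_penultimate hnil).symm
  have := hp.getVert_injOn (by simp) (by simp) hpen
  have := mt length_eq_zero_iff.mp hnil
  omega

theorem IsPath.length_eq_two_of_mem_support {a b v : V} {p : G.Walk a b} (hp : p.IsPath)
    (hv : v ∈ p.support) (hva : v ≠ a) (hvb : v ≠ b) (hN : ∀ t, G.Adj v t → t = a ∨ t = b) :
    p.length = 2 := by
  obtain ⟨i, rfl, hi⟩ := mem_support_iff_exists_getVert.mp hv
  have hi0 : i ≠ 0 := by rintro rfl; exact hva (getVert_zero p)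
  have hil : i ≠ p.length := by rintro rfl; exact hvb (getVert_length p)
  have hinj {m n : ℕ} (hm : m ≤ p.length) (hn : n ≤ p.length) (h : p.getVert m = p.getVert n) :
      m = n := hp.getVert_injOn hm hn h
  obtain ⟨j, rfl⟩ := Nat.exists_eq_succ_of_ne_zero hi0
  have hprev : p.getVert j = p.getVert 0 ∨ p.getVert j = p.getVert p.length := by
    rw [getVert_zero, getVert_length]
    exact hN _ (p.adj_getVert_succ (by omega)).symm
  have hnext : p.getVert (j + 2) = p.getVert 0 ∨ p.getVert (j + 2) = p.getVert p.length := by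
    rw [getVert_zero, getVert_length]
    exact hN _ (p.adj_getVert_succ (by omega))
  have hj : j = 0 := by
    rcases hprev with h | h <;> have := hinj (by omega) (by omega) h <;> omega
  have hlen : j + 2 = p.length := by
    rcases hnext with h | h <;> have := hinj (by omega) (by omega) h <;> omega
  omega

theorem IsPath.isCycle_cons_concat {w y z : V} {q : G.Walk y z} (hq : q.IsPath)
    (hw : w ∉ q.support) (hyz : y ≠ z) (hwy : G.Adj w y) (hzw : G.Adj z w) :
    (cons hwy (q.concat hzw)).IsCycle := by
  refine (cons_isCycle_iff _ _).mpr ⟨hq.concat hw hzw, ?_⟩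
  rw [edges_concat, List.concat_eq_append, List.mem_append, List.mem_singleton, not_or]
  refine ⟨fun h => hw (q.fst_mem_support_of_mem_edges h), ?_⟩
  rw [Sym2.eq_swap]
  intro h
  exact hyz (Sym2.congr_left.mp h)

end Walk

theorem eq_or_eq_of_degree_le_two [Fintype V] [DecidableRel G.Adj] {w y z : V}
    (hw : G.degree w ≤ 2) (hy : G.Adj w y) (hz : G.Adj w z) (hyz : y ≠ z) :
    ∀ t, G.Adj w t → t = y ∨ t = z := by
  by_contra! ⟨t, ht, hty, htz⟩
  have : 2 < (G.neighborFinset w).card :=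
    Finset.two_lt_card.mpr ⟨y, by simpa, z, by simpa, t, by simpa, hyz, hty.symm, htz.symm⟩
  rw [card_neighborFinset_eq_degree] at this
  omega

theorem mem_edgeSet_of_mem_edges_addEdge {u v a b : V} {p : (addEdge G u v).Walk a b}
    {e : Sym2 V} (he : e ∈ p.edges) (hne : e ≠ s(u, v)) : e ∈ G.edgeSet := by
  have := p.edges_subset_edgeSet he
  simp only [addEdge, edgeSet_sup, edgeSet_fromEdgeSet, Set.mem_union, Set.mem_sdiff,
    Set.mem_singleton_iff] at this
  tauto

theorem IsCkSaturated.exists_isPath {k : ℕ} (hsat : IsCkSaturated k G) {u v : V} (huv : u ≠ v)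
    (hadj : ¬ G.Adj u v) : ∃ p : G.Walk v u, p.IsPath ∧ p.length + 1 = k := by
  obtain ⟨w, c, hc, hlen⟩ := hsat.2 u v huv hadj
  by_cases he : s(u, v) ∈ c.edges
  · obtain ⟨p, hp, hplen, hpe⟩ := hc.exists_isPath_of_mem_edges he
    have hG : ∀ e ∈ p.edges, e ∈ G.edgeSet := fun e h =>
      mem_edgeSet_of_mem_edges_addEdge h (by rintro rfl; exact hpe h)
    exact ⟨p.transfer G hG, hp.transfer hG, by rw [Walk.length_transfer]; omega⟩
  · have hG : ∀ e ∈ c.edges, e ∈ G.edgeSet := fun e h =>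
      mem_edgeSet_of_mem_edges_addEdge h (by rintro rfl; exact he h)
    exact absurd ⟨w, c.transfer G hG, hc.transfer hG, by rw [Walk.length_transfer, hlen]⟩ hsat.1

theorem IsCkSaturated.exists_isPath_of_forall_adj {k : ℕ} (hsat : IsCkSaturated k G)
    {x y t : V} (hx : ∀ s, G.Adj x s → s = y) (htx : t ≠ x) (hty : t ≠ y) :
    ∃ q : G.Walk y t, q.IsPath ∧ q.length + 2 = k := by
  obtain ⟨p, hp, hlen⟩ := hsat.exists_isPath htx (fun h => hty (hx t h.symm))
  cases p with
  | nil => exact absurd rfl htx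
  | cons h q =>
    obtain rfl := hx _ h
    exact ⟨q, hp.of_cons, by simpa [add_assoc] using hlen⟩

end SimpleGraph

theorem stmt_3 {V : Type*} [Fintype V] (G : SimpleGraph V) [DecidableRel G.Adj]
    (k : ℕ) (hk : 5 ≤ k) (hsat : IsCkSaturated k G)
    (x y w : V) (hd : G.degree x = 1) (hxy : G.Adj x y) (hyw : G.Adj y w)
    (hxw : x ≠ w) :
    3 ≤ G.degree w := by
  by_contra! hdeg
  have hleaf : ∀ t, G.Adj x t → t = y := fun t ht =>
    (degree_eq_one_iff_existsUnique_adj.mp hd).unique ht hxy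
  have hwy : w ≠ y := hyw.ne'
  by_cases hz : ∃ z, G.Adj w z ∧ z ≠ y
  · obtain ⟨z, hwz, hzy⟩ := hz
    have hN := eq_or_eq_of_degree_le_two (by omega) hyw.symm hwz hzy.symm
    have hzx : z ≠ x := by rintro rfl; exact hwy (hleaf w hwz.symm)
    obtain ⟨q, hq, hlen⟩ := hsat.exists_isPath_of_forall_adj hleaf hzx hzy
    by_cases hwq : w ∈ q.support
    · have := hq.length_eq_two_of_mem_support hwq hwy hwz.ne hN
      omega
    · refine hsat.1 ⟨w, _, hq.isCycle_cons_concat hwq hzy.symm hyw.symm hwz.symm, ?_⟩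
      simp only [Walk.length_cons, Walk.length_concat]
      omega
  · push Not at hz
    obtain ⟨q, hq, hlen⟩ := hsat.exists_isPath_of_forall_adj hleaf hxw.symm hwy
    have := hq.length_eq_one_of_forall_adj hwy.symm hz
    omega
end

section
/- For all n ≥ k ≥ 6, every C_k-semisaturated graph on n vertices has more than (1 + 1/(2k−2))·n − 2 edges; consequently ssat(n, C_k) > (1 + 1/(2k−2))·n − 2. -/
open SimpleGraph

/-- `sat(n, C_k)`: minimum number of edges of a `C_k`-saturated graph on `n` vertices. -/
noncomputable def satNum (n k : ℕ) : ℕ :=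
  sInf {m : ℕ | ∃ G : SimpleGraph (Fin n), IsCkSaturated k G ∧ G.edgeSet.ncard = m}

/-- `ssat(n, C_k)`: minimum number of edges of a `C_k`-semisaturated graph on `n` vertices. -/
noncomputable def ssatNum (n k : ℕ) : ℕ :=
  sInf {m : ℕ | ∃ G : SimpleGraph (Fin n), IsCkSemisaturated k G ∧ G.edgeSet.ncard = m}

/-! In a `C_k`-semisaturated graph every non-edge `uv` is joined by a path of length `k - 1`.
Hence `G` is connected, every vertex is a leaf or lies on a cycle of length at most `k + 1`,
no vertex carries two leaves, and the neighbour of a leaf lies on a cycle of length `k - 1`.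
Charge every vertex to such a cycle, a leaf to the short cycle through its neighbour; a cycle is
then charged with at most `2k - 2` vertices. An irredundant family `F` of these cycles has
`n ≤ (2k - 2)|F|`, and every member has a private vertex. Deleting, for each member, one of its
edges at that vertex keeps `G` connected, so `e(G) ≥ n - 1 + |F| ≥ (1 + 1/(2k - 2)) n - 1`. -/

theorem Finset.exists_irredundant_subcover {ι α : Type*} [DecidableEq α] (f : ι → Finset α)
    {s : Finset α} {F : Finset ι} (h : s ⊆ F.biUnion f) :
    ∃ F' ⊆ F, s ⊆ F'.biUnion f ∧ ∀ i ∈ F', ∃ x ∈ f i, ∀ j ∈ F', j ≠ i → x ∉ f j := by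
  classical
  induction F using Finset.strongInduction with
  | H F ih =>
    by_cases hirr : ∀ i ∈ F, ∃ x ∈ f i, ∀ j ∈ F, j ≠ i → x ∉ f j
    · exact ⟨F, subset_rfl, h, hirr⟩
    push Not at hirr
    obtain ⟨i, hi, hred⟩ := hirr
    have h' : s ⊆ (F.erase i).biUnion f := by
      intro x hx
      obtain ⟨j, hj, hxj⟩ := mem_biUnion.mp (h hx)
      by_cases hji : j = i
      · subst hji
        obtain ⟨j', hj', hne, hxj'⟩ := hred x hxj
        exact mem_biUnion.mpr ⟨j', mem_erase.mpr ⟨hne, hj'⟩, hxj'⟩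
      · exact mem_biUnion.mpr ⟨j, mem_erase.mpr ⟨hji, hj⟩, hxj⟩
    obtain ⟨F', hF', hcov, hirr'⟩ := ih _ (erase_ssubset hi) h'
    exact ⟨F', hF'.trans (erase_subset _ _), hcov, hirr'⟩

namespace SimpleGraph

variable {V : Type*} {G H : SimpleGraph V} {u v w x y : V}

theorem Walk.reachable_of_forall_mem_edges (p : G.Walk u v)
    (h : ∀ x y, s(x, y) ∈ p.edges → H.Reachable x y) : H.Reachable u v := by
  induction p with
  | nil => rfl
  | cons hadj q ih => exact (h _ _ (by simp)).trans (ih fun x y hxy ↦ h x y (by simp [hxy]))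

theorem Preconnected.of_forall_adj (hG : G.Preconnected)
    (h : ∀ x y, G.Adj x y → H.Reachable x y) : H.Preconnected := fun a b ↦
  (hG a b).elim fun p ↦ p.reachable_of_forall_mem_edges fun x y hxy ↦ h x y (p.adj_of_mem_edges hxy)

theorem Walk.IsCycle.exists_isPath_of_mem_edges_s8 {c : G.Walk u u} (hc : c.IsCycle)
    (he : s(x, y) ∈ c.edges) : ∃ p : G.Walk x y, p.IsPath ∧ p.length + 1 = c.length ∧
      p.edges ⊆ c.edges ∧ s(x, y) ∉ p.edges := by
  classical
  have hx := c.fst_mem_support_of_mem_edges he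
  have hrot := c.rotate_edges x hx
  have hc' := hc.rotate hx
  set c' := c.rotate x hx
  have hy := c'.snd_mem_support_of_mem_edges (hrot.mem_iff.mpr he)
  set P := c'.takeUntil y hy
  set Q := c'.dropUntil y hy
  have hspec : P.append Q = c' := c'.take_spec hy
  have hP : P.IsPath := hc'.isPath_takeUntil hy
  have hQ : Q.IsPath := (hspec ▸ hc').isPath_of_append_right
    (Walk.not_nil_of_ne (c.adj_of_mem_edges he).ne)
  have hdisj : P.edges.Disjoint Q.edges := hc'.isTrail.disjoint_edges_takeUntil_dropUntil hy
  have hlen : P.length + Q.length = c.length := by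
    rw [← length_append, hspec, length_rotate]
  have hedges : ∀ e, e ∈ c.edges ↔ e ∈ P.edges ∨ e ∈ Q.edges := fun e ↦ by
    rw [← hrot.mem_iff, ← hspec, edges_append, List.mem_append]
  rcases (hedges _).mp he with heP | heQ
  · refine ⟨Q.reverse, hQ.reverse, ?_, fun e he ↦ ?_, fun he ↦ hdisj heP (by simpa using he)⟩
    · have := hP.length_eq_one_of_mem_edges heP
      rw [length_reverse]
      omega
    · exact (hedges e).mpr (Or.inr (by simpa using he))
  · refine ⟨P, hP, ?_, fun e he ↦ (hedges e).mpr (Or.inl he), fun he ↦ hdisj he heQ⟩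
    have := hQ.length_eq_one_of_mem_edges (Sym2.eq_swap ▸ heQ)
    omega

theorem Walk.isCycle_cons_of_isPath {h : G.Adj u v} {q : G.Walk v u} (hq : q.IsPath)
    (hlen : 2 ≤ q.length) : (cons h q).IsCycle := by
  refine (cons_isCycle_iff q h).mpr ⟨hq, fun he ↦ ?_⟩
  have := hq.length_eq_one_of_mem_edges (Sym2.eq_swap ▸ he)
  omega

theorem exists_isCycle_of_adj_of_isPath {v : V} (hx : G.Adj v x) (hy : G.Adj v y) (hxy : x ≠ y)
    {p : G.Walk x y} (hp : p.IsPath) (hlen : p.length ≠ 2) :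
    ∃ c : G.Walk v v, c.IsCycle ∧ c.length ≤ p.length + 2 := by
  classical
  by_cases hv : v ∈ p.support
  · have hsum : (p.takeUntil v hv).length + (p.dropUntil v hv).length = p.length := by
      rw [← Walk.length_append, p.take_spec hv]
    have htake : (p.takeUntil v hv).length ≠ 0 := fun h ↦ hx.ne' (Walk.eq_of_length_eq_zero h)
    have hdrop : (p.dropUntil v hv).length ≠ 0 := fun h ↦ hy.ne (Walk.eq_of_length_eq_zero h)
    by_cases ht : 2 ≤ (p.takeUntil v hv).length
    · exact ⟨.cons hx (p.takeUntil v hv), Walk.isCycle_cons_of_isPath (hp.takeUntil hv) ht,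
        by rw [Walk.length_cons]; omega⟩
    · exact ⟨.cons hy (p.dropUntil v hv).reverse,
        Walk.isCycle_cons_of_isPath (hp.dropUntil hv).reverse (by rw [Walk.length_reverse]; omega),
        by rw [Walk.length_cons, Walk.length_reverse]; omega⟩
  · have hpos : p.length ≠ 0 := fun h ↦ hxy (Walk.eq_of_length_eq_zero h)
    exact ⟨.cons hx (p.concat hy.symm), Walk.isCycle_cons_of_isPath (hp.concat hv hy.symm)
      (by rw [Walk.length_concat]; omega), by simp⟩

theorem Reachable.of_sym2_eq {a b c d : V} (h : H.Reachable a b) (he : s(a, b) = s(c, d)) :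
    H.Reachable c d := by
  rcases Sym2.eq_iff.mp he with ⟨rfl, rfl⟩ | ⟨rfl, rfl⟩
  exacts [h, h.symm]

theorem Walk.card_support_toFinset_le [DecidableEq V] {v : V} {c : G.Walk v v} (hc : ¬ c.Nil) :
    c.support.toFinset.card ≤ c.length := by
  rw [← c.cons_tail_support, List.toFinset_cons,
    Finset.insert_eq_of_mem (List.mem_toFinset.mpr (c.end_mem_tail_support hc))]
  calc _ ≤ c.support.tail.length := List.toFinset_card_le _
    _ = c.length := by simp

def IsLeafAt (G : SimpleGraph V) (u w : V) : Prop :=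
  G.Adj u w ∧ ∀ x, G.Adj u x → x = w

theorem IsLeafAt.exists_eq_cons {t : V} (hL : G.IsLeafAt u w) (p : G.Walk u t) (hp : ¬ p.Nil) :
    ∃ (h : G.Adj u w) (q : G.Walk w t), p = .cons h q := by
  cases p with
  | nil => simp at hp
  | cons h q =>
    obtain rfl := hL.2 _ h
    exact ⟨h, q, rfl⟩

structure RootedCycle (G : SimpleGraph V) where
  base : V
  walk : G.Walk base base
  isCycle : walk.IsCycle

/-- Deleting the edges `s(y C, z C)` keeps `G` connected: an edge of `C` is deleted on behalf
of another cycle `D` only if `P D` and `¬ P C`, so the `P`-cycles reconnect first, then the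
others. -/
structure IsPrivateEdgeFamily (F : Finset G.RootedCycle) (P : G.RootedCycle → Prop)
    (y z : G.RootedCycle → V) : Prop where
  mem_edges : ∀ C ∈ F, s(y C, z C) ∈ C.walk.edges
  mem_support : ∀ C ∈ F, ∀ D ∈ F, D ≠ C → y C ∈ D.walk.support → P C ∧ ¬ P D

namespace IsPrivateEdgeFamily

variable {F : Finset G.RootedCycle} {P : G.RootedCycle → Prop} {y z : G.RootedCycle → V}

theorem reachable (hF : IsPrivateEdgeFamily F P y z) {C : G.RootedCycle} (hC : C ∈ F) :
    (G.deleteEdges ((fun D ↦ s(y D, z D)) '' F)).Reachable (y C) (z C) := by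
  set S := (fun D ↦ s(y D, z D)) '' ↑F
  have reach_of : ∀ C ∈ F, (∀ D ∈ F, D ≠ C → s(y D, z D) ∈ C.walk.edges →
      (G.deleteEdges S).Reachable (y D) (z D)) → (G.deleteEdges S).Reachable (y C) (z C) := by
    intro C hC h
    obtain ⟨p, -, -, hsub, hnot⟩ := C.isCycle.exists_isPath_of_mem_edges_s8 (hF.mem_edges C hC)
    refine p.reachable_of_forall_mem_edges fun a b hab ↦ ?_
    by_cases hS : s(a, b) ∈ S
    · obtain ⟨D, hD, hDab⟩ := hS
      dsimp only at hDab
      have hDC : D ≠ C := by rintro rfl; exact hnot (hDab ▸ hab)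
      exact (h D hD hDC (hDab ▸ hsub hab)).of_sym2_eq hDab
    · exact (deleteEdges_adj.mpr ⟨p.adj_of_mem_edges hab, hS⟩).reachable
  have hsupp : ∀ C ∈ F, ∀ D ∈ F, D ≠ C → s(y D, z D) ∈ C.walk.edges → P D ∧ ¬ P C :=
    fun C hC D hD hDC he ↦
      hF.mem_support D hD C hC hDC.symm (C.walk.fst_mem_support_of_mem_edges he)
  have reach_P : ∀ C ∈ F, P C → (G.deleteEdges S).Reachable (y C) (z C) :=
    fun C hC hP ↦ reach_of C hC fun D hD hDC he ↦ absurd hP (hsupp C hC D hD hDC he).2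
  exact reach_of C hC fun D hD hDC he ↦ reach_P D hD (hsupp C hC D hD hDC he).1

theorem preconnected_deleteEdges (hF : IsPrivateEdgeFamily F P y z) (hG : G.Preconnected) :
    (G.deleteEdges ((fun D ↦ s(y D, z D)) '' F)).Preconnected := by
  refine hG.of_forall_adj fun a b hab ↦ ?_
  by_cases hS : s(a, b) ∈ (fun D ↦ s(y D, z D)) '' ↑F
  · obtain ⟨D, hD, hDab⟩ := hS
    exact (hF.reachable hD).of_sym2_eq hDab
  · exact (deleteEdges_adj.mpr ⟨hab, hS⟩).reachable

theorem injOn (hF : IsPrivateEdgeFamily F P y z) :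
    Set.InjOn (fun D ↦ s(y D, z D)) F := by
  intro C hC D hD h
  dsimp only at h
  by_contra hCD
  have hCD' := hF.mem_support C hC D hD (Ne.symm hCD)
    (D.walk.fst_mem_support_of_mem_edges (h ▸ hF.mem_edges D hD))
  have hDC' := hF.mem_support D hD C hC hCD
    (C.walk.fst_mem_support_of_mem_edges (h ▸ hF.mem_edges C hC))
  exact hCD'.2 hDC'.1

theorem card_add_card_le_ncard_edgeSet_add_one [Finite V] (hF : IsPrivateEdgeFamily F P y z)
    (hG : G.Connected) :
    Nat.card V + F.card ≤ G.edgeSet.ncard + 1 := by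
  set S := (fun D ↦ s(y D, z D)) '' ↑F
  have hSG : S ⊆ G.edgeSet := by
    rintro _ ⟨D, hD, rfl⟩
    exact D.walk.edges_subset_edgeSet (hF.mem_edges D hD)
  have hS : S.ncard = F.card := by rw [hF.injOn.ncard_image, Set.ncard_coe_finset]
  have hconn : (G.deleteEdges S).Connected :=
    (connected_iff _).mpr ⟨hF.preconnected_deleteEdges hG.preconnected, hG.nonempty⟩
  have := hconn.card_vert_le_card_edgeSet_add_one
  rw [Nat.card_coe_set_eq, edgeSet_deleteEdges, Set.ncard_sdiff hSG, hS] at this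
  have := Set.ncard_le_ncard hSG
  omega

end IsPrivateEdgeFamily

namespace RootedCycle

variable [Fintype V] {k : ℕ} {C : G.RootedCycle} {x : V}

open Classical in
/-- Only cycles of length `< k` are charged with leaves, so that a cycle of length `≤ k + 1`
covers at most `2k - 2` vertices. -/
noncomputable def cover (k : ℕ) (C : G.RootedCycle) : Finset V :=
  C.walk.support.toFinset ∪
    ({u | C.walk.length < k ∧ ∃ w ∈ C.walk.support, G.IsLeafAt u w} : Finset V)

theorem mem_cover : x ∈ C.cover k ↔
    x ∈ C.walk.support ∨ C.walk.length < k ∧ ∃ w ∈ C.walk.support, G.IsLeafAt x w := by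
  simp [cover]

theorem exists_isPrivateEdgeFamily {F : Finset G.RootedCycle}
    (hF : ∀ C ∈ F, ∃ x ∈ C.cover k, ∀ D ∈ F, D ≠ C → x ∉ D.cover k) :
    ∃ y z, IsPrivateEdgeFamily F (fun C ↦ C.walk.length < k) y z := by
  have hyz : ∀ C, ∃ y z : V, C ∈ F → s(y, z) ∈ C.walk.edges ∧
      ∀ D ∈ F, D ≠ C → y ∈ D.walk.support → C.walk.length < k ∧ ¬ D.walk.length < k := by
    intro C
    by_cases hC : C ∈ F
    swap
    · exact ⟨C.base, C.base, fun h ↦ absurd h hC⟩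
    obtain ⟨x, hx, hpriv⟩ := hF C hC
    obtain ⟨y, hy, hypriv⟩ : ∃ y ∈ C.walk.support, ∀ D ∈ F, D ≠ C → y ∈ D.walk.support →
        C.walk.length < k ∧ ¬ D.walk.length < k := by
      rcases mem_cover.mp hx with hxC | ⟨hshort, w, hw, hL⟩
      · exact ⟨x, hxC, fun D hD hDC hxD ↦ absurd (mem_cover.mpr (.inl hxD)) (hpriv D hD hDC)⟩
      · exact ⟨w, hw, fun D hD hDC hwD ↦
          ⟨hshort, fun hD' ↦ hpriv D hD hDC (mem_cover.mpr (.inr ⟨hD', w, hwD, hL⟩))⟩⟩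
    obtain ⟨e, he, hye⟩ :=
      (Walk.mem_support_iff_exists_mem_edges_of_not_nil C.isCycle.not_nil).mp hy
    exact ⟨y, Sym2.Mem.other hye, fun _ ↦ ⟨by rwa [Sym2.other_spec hye], hypriv⟩⟩
  choose y z hyz using hyz
  exact ⟨y, z, fun C hC ↦ (hyz C hC).1, fun C hC ↦ (hyz C hC).2⟩

end RootedCycle

end SimpleGraph

namespace IsCkSemisaturated

variable {V : Type*} {G : SimpleGraph V} {k : ℕ} {u v w : V}

theorem exists_isPath (hG : IsCkSemisaturated k G) (hne : u ≠ v) (hadj : ¬ G.Adj u v) :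
    ∃ p : G.Walk u v, p.IsPath ∧ p.length + 1 = k := by
  obtain ⟨w, c, hc, hlen, he⟩ := hG u v hne hadj
  obtain ⟨p, hp, hplen, -, hnot⟩ := hc.exists_isPath_of_mem_edges_s8 he
  have hpG : ∀ e ∈ p.edges, e ∈ G.edgeSet := fun e he' ↦ by
    have := p.edges_subset_edgeSet he'
    simp only [addEdge, edgeSet_sup, edgeSet_fromEdgeSet, Set.mem_union, Set.mem_sdiff,
      Set.mem_singleton_iff] at this
    exact this.resolve_right fun h ↦ hnot (h.1 ▸ he')
  exact ⟨p.transfer G hpG, hp.transfer hpG, by rw [Walk.length_transfer]; omega⟩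

theorem preconnected (hG : IsCkSemisaturated k G) : G.Preconnected := fun u v ↦ by
  rcases eq_or_ne u v with rfl | hne
  · rfl
  by_cases hadj : G.Adj u v
  · exact hadj.reachable
  · obtain ⟨p, -⟩ := hG.exists_isPath hne hadj
    exact ⟨p⟩

theorem exists_adj [Nontrivial V] (hG : IsCkSemisaturated k G) (v : V) :
    ∃ w, G.Adj v w := by
  obtain ⟨u, hu⟩ := exists_ne v
  by_cases h : G.Adj v u
  · exact ⟨u, h⟩
  obtain ⟨p, -⟩ := hG.exists_isPath hu.symm h
  exact ⟨p.snd, p.adj_snd (Walk.not_nil_of_ne hu.symm)⟩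

theorem exists_isLeafAt_or_isCycle [Nontrivial V] (hG : IsCkSemisaturated k G) (hk : 4 ≤ k)
    (v : V) : (∃ w, G.IsLeafAt v w) ∨ ∃ c : G.Walk v v, c.IsCycle ∧ c.length ≤ k + 1 := by
  obtain ⟨w, hw⟩ := hG.exists_adj v
  by_cases h : ∀ x, G.Adj v x → x = w
  · exact .inl ⟨w, hw, h⟩
  push Not at h
  obtain ⟨x, hx, hxw⟩ := h
  refine .inr ?_
  by_cases hadj : G.Adj x w
  · obtain ⟨c, hc, hlen⟩ := exists_isCycle_of_adj_of_isPath hx hw hxw (Walk.IsPath.of_adj hadj)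
      (by simp)
    exact ⟨c, hc, by rw [hadj.length_toWalk] at hlen; omega⟩
  · obtain ⟨p, hp, hplen⟩ := hG.exists_isPath hxw hadj
    obtain ⟨c, hc, hlen⟩ := exists_isCycle_of_adj_of_isPath hx hw hxw hp (by omega)
    exact ⟨c, hc, by omega⟩

theorem eq_of_isLeafAt {u' : V} (hG : IsCkSemisaturated k G) (hk : 4 ≤ k)
    (hu : G.IsLeafAt u w) (hu' : G.IsLeafAt u' w) : u = u' := by
  by_contra hne
  have hadj : ¬ G.Adj u u' := fun h ↦ hu'.1.ne (hu.2 _ h)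
  obtain ⟨p, hp, hplen⟩ := hG.exists_isPath hne hadj
  obtain ⟨_, q, rfl⟩ := hu.exists_eq_cons p (Walk.not_nil_of_ne hne)
  obtain ⟨_, r, hr⟩ := hu'.exists_eq_cons q.reverse (Walk.not_nil_of_ne hu'.1.ne)
  have hr_path : r.IsPath := by
    have h := hp.of_cons.reverse
    rw [hr] at h
    exact h.of_cons
  have hr_nil : r.Nil := Walk.isPath_iff_nil.mp hr_path
  have := congrArg Walk.length hr
  simp only [Walk.length_reverse, Walk.length_cons, Walk.length_eq_zero_iff.mpr hr_nil]
    at this hplen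
  omega

variable [Fintype V]

theorem exists_adj_ne_of_isLeafAt (hG : IsCkSemisaturated k G)
    (hV : 2 < Fintype.card V) (hL : G.IsLeafAt u w) : ∃ y, G.Adj w y ∧ y ≠ u := by
  classical
  obtain ⟨t, -, ht⟩ := Finset.exists_mem_notMem_of_card_lt_card (s := {u, w}) (t := .univ)
    ((Finset.card_le_two).trans_lt hV)
  obtain ⟨htu, htw⟩ : t ≠ u ∧ t ≠ w := by simpa [not_or] using ht
  obtain ⟨p, hp, -⟩ := hG.exists_isPath htu.symm fun h ↦ htw (hL.2 t h)
  obtain ⟨h, R, rfl⟩ := hL.exists_eq_cons p (Walk.not_nil_of_ne htu.symm)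
  refine ⟨R.snd, R.adj_snd (Walk.not_nil_of_ne htw.symm), fun hyu ↦ ?_⟩
  exact ((Walk.cons_isPath_iff h R).mp hp).2 (hyu ▸ R.getVert_mem_support 1)

theorem exists_isCycle_of_isLeafAt (hG : IsCkSemisaturated k G) (hk : 4 ≤ k)
    (hV : 2 < Fintype.card V) (hL : G.IsLeafAt u w) :
    ∃ c : G.Walk w w, c.IsCycle ∧ c.length + 1 = k := by
  obtain ⟨y, hwy, hyu⟩ := hG.exists_adj_ne_of_isLeafAt hV hL
  obtain ⟨p, hp, hplen⟩ := hG.exists_isPath hyu.symm fun h ↦ hwy.ne (hL.2 y h).symm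
  obtain ⟨_, R, rfl⟩ := hL.exists_eq_cons p (Walk.not_nil_of_ne hyu.symm)
  rw [Walk.length_cons] at hplen
  exact ⟨.cons hwy R.reverse,
    Walk.isCycle_cons_of_isPath hp.of_cons.reverse (by rw [Walk.length_reverse]; omega),
    by rw [Walk.length_cons, Walk.length_reverse]; omega⟩

theorem card_cover_le (hG : IsCkSemisaturated k G) (hk : 4 ≤ k) {C : G.RootedCycle}
    (hC : C.walk.length ≤ k + 1) : (C.cover k).card ≤ 2 * k - 2 := by
  classical
  have hsupp := Walk.card_support_toFinset_le C.isCycle.not_nil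
  set L : Finset V := {u | C.walk.length < k ∧ ∃ w ∈ C.walk.support, G.IsLeafAt u w}
  have hcard : (C.cover k).card ≤ C.walk.support.toFinset.card + L.card :=
    Finset.card_union_le _ _
  by_cases hs : C.walk.length < k
  · have hL : L.card ≤ C.walk.support.toFinset.card := by
      refine Finset.card_le_card_of_forall_subsingleton G.IsLeafAt (fun u hu ↦ ?_)
        fun w _ u hu u' hu' ↦ hG.eq_of_isLeafAt hk hu.2 hu'.2
      obtain ⟨-, w, hw, hL⟩ := (Finset.mem_filter.mp hu).2
      exact ⟨w, List.mem_toFinset.mpr hw, hL⟩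
    omega
  · have hL : L = ∅ := Finset.filter_eq_empty_iff.mpr fun u _ h ↦ hs h.1
    rw [hL, Finset.card_empty] at hcard
    omega

theorem exists_mem_cover (hG : IsCkSemisaturated k G) (hk : 4 ≤ k) (hV : 2 < Fintype.card V)
    (v : V) : ∃ C : G.RootedCycle, C.walk.length ≤ k + 1 ∧ v ∈ C.cover k := by
  have : Nontrivial V := Fintype.one_lt_card_iff_nontrivial.mp (by omega)
  rcases hG.exists_isLeafAt_or_isCycle hk v with ⟨w, hL⟩ | ⟨c, hc, hlen⟩
  · obtain ⟨c, hc, hlen⟩ := hG.exists_isCycle_of_isLeafAt hk hV hL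
    exact ⟨⟨w, c, hc⟩, show c.length ≤ k + 1 by omega,
      RootedCycle.mem_cover.mpr (.inr ⟨show c.length < k by omega, w, c.start_mem_support, hL⟩)⟩
  · exact ⟨⟨v, c, hc⟩, hlen, RootedCycle.mem_cover.mpr (.inl c.start_mem_support)⟩

theorem exists_card_le_mul_and_card_add_le (hG : IsCkSemisaturated k G) (hk : 4 ≤ k)
    (hV : 2 < Fintype.card V) :
    ∃ t, Fintype.card V ≤ (2 * k - 2) * t ∧ Fintype.card V + t ≤ G.edgeSet.ncard + 1 := by
  classical
  choose C hClen hCmem using hG.exists_mem_cover hk hV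
  obtain ⟨F, hFsub, hcov, hirr⟩ := Finset.exists_irredundant_subcover (RootedCycle.cover k)
    (s := .univ) (F := Finset.univ.image C) fun v _ ↦
      Finset.mem_biUnion.mpr ⟨C v, Finset.mem_image_of_mem _ (Finset.mem_univ _), hCmem v⟩
  have hFlen : ∀ D ∈ F, D.walk.length ≤ k + 1 := fun D hD ↦ by
    obtain ⟨v, -, rfl⟩ := Finset.mem_image.mp (hFsub hD)
    exact hClen v
  obtain ⟨y, z, hF⟩ := RootedCycle.exists_isPrivateEdgeFamily hirr
  refine ⟨F.card, ?_, ?_⟩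
  · calc Fintype.card V = (Finset.univ : Finset V).card := Finset.card_univ.symm
      _ ≤ (F.biUnion (RootedCycle.cover k)).card := Finset.card_le_card hcov
      _ ≤ F.card * (2 * k - 2) := Finset.card_biUnion_le_card_mul _ _ _ fun D hD ↦
          hG.card_cover_le hk (hFlen D hD)
      _ = (2 * k - 2) * F.card := Nat.mul_comm _ _
  · have : Nonempty V := Fintype.card_pos_iff.mp (by omega)
    have := hF.card_add_card_le_ncard_edgeSet_add_one ((connected_iff G).mpr ⟨hG.preconnected, ‹_›⟩)
    rwa [Nat.card_eq_fintype_card] at this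

theorem lt_ncard_edgeSet (hG : IsCkSemisaturated k G) (hk : 4 ≤ k) (hV : 2 < Fintype.card V) :
    (1 + 1 / (2 * (k : ℝ) - 2)) * Fintype.card V - 2 < G.edgeSet.ncard := by
  obtain ⟨t, hVt, hVE⟩ := hG.exists_card_le_mul_and_card_add_le hk hV
  have hK : (0 : ℝ) < 2 * k - 2 := by
    have : (4 : ℝ) ≤ k := by exact_mod_cast hk
    linarith
  have hVt' : (Fintype.card V : ℝ) ≤ (2 * k - 2) * t := by
    have := (Nat.cast_le (α := ℝ)).mpr hVt
    push_cast [Nat.cast_sub (show 2 ≤ 2 * k by omega)] at this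
    exact this
  have hVE' : (Fintype.card V : ℝ) + t ≤ G.edgeSet.ncard + 1 := by exact_mod_cast hVE
  have ht : (Fintype.card V : ℝ) / (2 * k - 2) ≤ t := by rw [div_le_iff₀ hK]; linarith
  calc (1 + 1 / (2 * (k : ℝ) - 2)) * Fintype.card V - 2
      = Fintype.card V + Fintype.card V / (2 * k - 2) - 2 := by ring
    _ < G.edgeSet.ncard := by linarith

end IsCkSemisaturated

theorem stmt_8 (n k : ℕ) (hk : 6 ≤ k) (hkn : k ≤ n) :
    (∀ G : SimpleGraph (Fin n), IsCkSemisaturated k G →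
      (1 + 1 / (2 * (k : ℝ) - 2)) * (n : ℝ) - 2 < (G.edgeSet.ncard : ℝ)) ∧
    (1 + 1 / (2 * (k : ℝ) - 2)) * (n : ℝ) - 2 < (ssatNum n k : ℝ) := by
  have hbound : ∀ G : SimpleGraph (Fin n), IsCkSemisaturated k G →
      (1 + 1 / (2 * (k : ℝ) - 2)) * (n : ℝ) - 2 < (G.edgeSet.ncard : ℝ) := fun G hG ↦ by
    simpa using hG.lt_ncard_edgeSet (by omega) (by rw [Fintype.card_fin]; omega)
  refine ⟨hbound, ?_⟩
  have hTop : IsCkSemisaturated k (⊤ : SimpleGraph (Fin n)) := fun u v hne hadj ↦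
    absurd ((top_adj u v).mpr hne) hadj
  obtain ⟨G, hG, hcard⟩ := Nat.sInf_mem (s := {m | ∃ G : SimpleGraph (Fin n),
    IsCkSemisaturated k G ∧ G.edgeSet.ncard = m}) ⟨_, ⊤, hTop, rfl⟩
  rw [ssatNum, ← hcard]
  exact hbound G hG
end

section
/- Let G be a connected graph on n vertices in which every vertex is contained in a cycle of length at most k+1. Then e(G) ≥ (n−1)·(k+2)/(k+1). -/
/-!
Greedily choose cycles of length at most `k + 1`, each through a vertex not covered by the
previous ones; since each covers at most `k + 1` new vertices, at least `n / (k + 1)` of them are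
chosen. A chosen cycle contains an edge at a newly covered vertex, which is a new edge lying on a
cycle of the union, so each cycle raises the circuit rank `e - n + c` by at least one. The circuit
rank is monotone under adding edges, so that of `G`, namely `e(G) - n + 1`, is at least
`n / (k + 1)`.
-/

open SimpleGraph

namespace SimpleGraph

variable {V : Type*} {H K : SimpleGraph V} {u v w : V}

theorem Reachable.of_sup_edge {x y : V} (h : (H ⊔ edge u v).Reachable x y) :
    H.Reachable x y ∨ (H.Reachable x u ∧ H.Reachable v y) ∨
      (H.Reachable x v ∧ H.Reachable u y) := by
  obtain ⟨p⟩ := h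
  induction p with
  | nil => exact .inl .rfl
  | cons hadj _ ih =>
    rcases hadj with hH | hE
    · exact ih.imp hH.reachable.trans
        (Or.imp (And.imp_left hH.reachable.trans) (And.imp_left hH.reachable.trans))
    · obtain ⟨⟨rfl, rfl⟩ | ⟨rfl, rfl⟩, -⟩ := (edge_adj ..).mp hE
      · rcases ih with h | ⟨h₁, h₂⟩ | ⟨-, h₂⟩
        exacts [.inr (.inl ⟨.rfl, h⟩), .inl (h₁.symm.trans h₂), .inl h₂]
      · rcases ih with h | ⟨-, h₂⟩ | ⟨h₁, h₂⟩
        exacts [.inr (.inr ⟨.rfl, h⟩), .inl h₂, .inl (h₁.symm.trans h₂)]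

theorem Walk.IsCycle.exists_mem_edges {C : H.Walk w w} (hC : C.IsCycle) (hv : v ∈ C.support) :
    ∃ x, s(v, x) ∈ C.edges := by
  obtain ⟨e, he, hve⟩ := (Walk.mem_support_iff_exists_mem_edges_of_not_nil hC.not_nil).mp hv
  obtain ⟨x, rfl⟩ := Sym2.mem_iff_exists.mp hve
  exact ⟨x, he⟩

theorem Walk.IsCycle.ncard_setOf_mem_support {C : H.Walk w w} (hC : C.IsCycle) :
    {x | x ∈ C.support}.ncard = C.length := by
  classical
  have : {x | x ∈ C.support} = C.support.tail.toFinset := by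
    ext x
    rw [Set.mem_ofPred_eq, Finset.mem_coe, List.mem_toFinset, C.mem_support_iff,
      or_iff_right_iff_imp]
    rintro rfl
    exact Walk.end_mem_tail_support hC.not_nil
  rw [this, Set.ncard_coe_finset, List.toFinset_card_of_nodup hC.support_nodup,
    List.length_tail, Walk.length_support, Nat.add_sub_cancel]

theorem support_sup_fromEdgeSet_subset (p : K.Walk u v) :
    (H ⊔ fromEdgeSet p.edgeSet).support ⊆ H.support ∪ {x | x ∈ p.support} := by
  rintro x ⟨y, hH | hp⟩
  · exact .inl ⟨y, hH⟩
  · exact .inr (p.fst_mem_support_of_mem_edges ((fromEdgeSet_adj _).mp hp).1)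

/-- The dimension of the cycle space of `H`, for finite `V` (`Nat.card` is `0` on infinite
types). -/
noncomputable def circuitRank (H : SimpleGraph V) : ℤ :=
  H.edgeSet.ncard - Nat.card V + Nat.card H.ConnectedComponent

theorem circuitRank_bot : (⊥ : SimpleGraph V).circuitRank = 0 := by
  have : Function.Bijective (⊥ : SimpleGraph V).connectedComponentMk :=
    ⟨fun _ _ h ↦ reachable_bot.mp (ConnectedComponent.exact h), Quot.mk_surjective⟩
  simp [circuitRank, Nat.card_eq_of_bijective _ this]

theorem Connected.circuitRank_eq (h : H.Connected) :
    H.circuitRank = H.edgeSet.ncard - Nat.card V + 1 := by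
  have := h.preconnected.subsingleton_connectedComponent
  have : Nonempty H.ConnectedComponent := ⟨H.connectedComponentMk h.nonempty.some⟩
  simp [circuitRank, Nat.card_unique]

variable [Finite V]

theorem card_connectedComponent_le_sup_edge_add_one :
    Nat.card H.ConnectedComponent ≤ Nat.card (H ⊔ edge u v).ConnectedComponent + 1 := by
  classical
  -- Two components of `H` merged by the edge `uv` are those of `u` and `v`, so removing the
  -- component of `v` leaves an injective map.
  let f (c : H.ConnectedComponent) : Option (H ⊔ edge u v).ConnectedComponent :=
    if c = H.connectedComponentMk v then none else some (c.map (.ofLE le_sup_left))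
  have hf : Function.Injective f := by
    refine ConnectedComponent.ind₂ fun x y hxy ↦ ?_
    by_cases hx : H.connectedComponentMk x = H.connectedComponentMk v <;>
      by_cases hy : H.connectedComponentMk y = H.connectedComponentMk v <;>
      simp only [f, hx, hy, if_true, if_false, reduceCtorEq, Option.some.injEq,
        ConnectedComponent.map_mk, ConnectedComponent.eq] at hxy ⊢
    rcases hxy.of_sup_edge with h | ⟨-, h⟩ | ⟨h, -⟩
    exacts [h, absurd (ConnectedComponent.sound h.symm) hy, absurd (ConnectedComponent.sound h) hx]
  simpa using Nat.card_le_card_of_injective f hf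

theorem card_connectedComponent_sup_edge_of_reachable (h : H.Reachable u v) :
    Nat.card (H ⊔ edge u v).ConnectedComponent = Nat.card H.ConnectedComponent := by
  refine (ConnectedComponent.card_le_card_of_le le_sup_left).antisymm
    (Nat.card_le_card_of_injective (ConnectedComponent.map (.ofLE le_sup_left)) ?_)
  refine ConnectedComponent.ind₂ fun x y hxy ↦ ?_
  simp only [ConnectedComponent.map_mk, ConnectedComponent.eq] at hxy ⊢
  rcases hxy.of_sup_edge with h' | ⟨h₁, h₂⟩ | ⟨h₁, h₂⟩
  exacts [h', h₁.trans (h.trans h₂), h₁.trans (h.symm.trans h₂)]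

theorem ncard_edgeSet_sup_edge (huv : u ≠ v) (hadj : ¬H.Adj u v) :
    (H ⊔ edge u v).edgeSet.ncard = H.edgeSet.ncard + 1 := by
  have : (edge u v).edgeSet = {s(u, v)} := by simp [edgeSet_edge, huv]
  rw [edgeSet_sup, this, Set.union_singleton, Set.ncard_insert_of_notMem (by simpa using hadj)]

theorem circuitRank_le_sup_edge : H.circuitRank ≤ (H ⊔ edge u v).circuitRank := by
  by_cases hadj : H.Adj u v
  · rw [sup_edge_of_adj H hadj]
  by_cases huv : u = v
  · rw [huv, sup_edge_self]
  have := card_connectedComponent_le_sup_edge_add_one (H := H) (u := u) (v := v)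
  simp only [circuitRank, ncard_edgeSet_sup_edge huv hadj]
  omega

theorem circuitRank_sup_edge_of_reachable (huv : u ≠ v) (hadj : ¬H.Adj u v)
    (h : H.Reachable u v) : (H ⊔ edge u v).circuitRank = H.circuitRank + 1 := by
  simp only [circuitRank, ncard_edgeSet_sup_edge huv hadj,
    card_connectedComponent_sup_edge_of_reachable h]
  push_cast
  ring

theorem circuitRank_le_sup_fromEdgeSet (s : Finset (Sym2 V)) :
    H.circuitRank ≤ (H ⊔ fromEdgeSet s).circuitRank := by
  classical
  induction s using Finset.induction_on with
  | empty => simp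
  | insert e s _ ih =>
    induction e using Sym2.ind with
    | _ u v =>
    have : H ⊔ fromEdgeSet ↑(insert s(u, v) s) = (H ⊔ fromEdgeSet s) ⊔ edge u v := by
      rw [Finset.coe_insert, Set.insert_eq, fromEdgeSet_union, sup_comm (fromEdgeSet _),
        ← sup_assoc, edge]
    exact this ▸ ih.trans circuitRank_le_sup_edge

theorem circuitRank_mono (hle : H ≤ K) : H.circuitRank ≤ K.circuitRank := by
  have := circuitRank_le_sup_fromEdgeSet (H := H) K.edgeSet.toFinite.toFinset
  rwa [Set.Finite.coe_toFinset, fromEdgeSet_edgeSet, sup_eq_right.mpr hle] at this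

theorem circuitRank_lt_of_reachable_deleteEdges (hle : H ≤ K) (hK : K.Adj u v)
    (hH : ¬H.Adj u v) (h : (K.deleteEdges {s(u, v)}).Reachable u v) :
    H.circuitRank < K.circuitRank := by
  have hK' : K.deleteEdges {s(u, v)} ⊔ edge u v = K :=
    sdiff_sup_cancel ((edge_le_iff _).mpr (.inr hK))
  have hle' : H ≤ K.deleteEdges {s(u, v)} := fun x y hxy ↦ (deleteEdges_adj ..).mpr
    ⟨hle hxy, fun he ↦ hH (by rw [← mem_edgeSet, ← Set.mem_singleton_iff.mp he]; exact hxy)⟩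
  calc H.circuitRank ≤ (K.deleteEdges {s(u, v)}).circuitRank := circuitRank_mono hle'
    _ < (K.deleteEdges {s(u, v)} ⊔ edge u v).circuitRank := by
      rw [circuitRank_sup_edge_of_reachable hK.ne (by simp) h]
      omega
    _ = K.circuitRank := by rw [hK']

theorem circuitRank_lt_of_isCycle (hle : H ≤ K) {C : K.Walk w w} (hC : C.IsCycle)
    (he : s(u, v) ∈ C.edges) (hH : ¬H.Adj u v) : H.circuitRank < K.circuitRank :=
  let ⟨hK, hreach⟩ := adj_and_reachable_delete_edges_iff_exists_cycle.mpr ⟨w, C, hC, he⟩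
  circuitRank_lt_of_reachable_deleteEdges hle hK hH hreach

theorem mul_circuitRank_add_ncard_compl_support_le {G : SimpleGraph V} {k : ℕ}
    (hcyc : ∀ x : V, ∃ (w : V) (C : G.Walk w w), C.IsCycle ∧ C.length ≤ k + 1 ∧ x ∈ C.support)
    (hle : H ≤ G) :
    (k + 1) * H.circuitRank + H.supportᶜ.ncard ≤ (k + 1) * G.circuitRank := by
  induction hm : H.supportᶜ.ncard using Nat.strong_induction_on generalizing H with
  | _ m ih =>
  obtain hm0 | ⟨v, hv⟩ := H.supportᶜ.eq_empty_or_nonempty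
  · rw [← hm, hm0, Set.ncard_empty, Nat.cast_zero, add_zero]
    exact mul_le_mul_of_nonneg_left (circuitRank_mono hle) (by positivity)
  obtain ⟨w, C, hC, hlen, hvC⟩ := hcyc v
  obtain ⟨x, hx⟩ := hC.exists_mem_edges hvC
  set K := H ⊔ fromEdgeSet C.edgeSet
  have hCK : ∀ e ∈ C.edges, e ∈ K.edgeSet := fun e he ↦ by
    rw [edgeSet_sup, edgeSet_fromEdgeSet]
    exact .inr ⟨he, G.not_isDiag_of_mem_edgeSet (C.edges_subset_edgeSet he)⟩
  have hrank : H.circuitRank < K.circuitRank := circuitRank_lt_of_isCycle le_sup_left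
    (hC.transfer hCK) (by rwa [Walk.edges_transfer]) fun h ↦ hv ⟨x, h⟩
  have hshrink : K.supportᶜ ⊂ H.supportᶜ :=
    ⟨Set.compl_subset_compl.mpr (support_mono le_sup_left), fun h ↦ h hv ⟨x, hCK _ hx⟩⟩
  have hcover : H.supportᶜ.ncard ≤ K.supportᶜ.ncard + (k + 1) := calc
    H.supportᶜ.ncard ≤ (K.supportᶜ ∪ {y | y ∈ C.support}).ncard := by
      refine Set.ncard_le_ncard fun y hy ↦ ?_
      by_cases hyK : y ∈ K.support
      · exact .inr ((support_sup_fromEdgeSet_subset C hyK).resolve_left hy)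
      · exact .inl hyK
    _ ≤ K.supportᶜ.ncard + {y | y ∈ C.support}.ncard := Set.ncard_union_le _ _
    _ ≤ K.supportᶜ.ncard + (k + 1) := by rw [hC.ncard_setOf_mem_support]; omega
  have hKG : K ≤ G := sup_le hle fun a b hab ↦ C.adj_of_mem_edges ((fromEdgeSet_adj _).mp hab).1
  have := ih _ (hm ▸ Set.ncard_lt_ncard hshrink) hKG rfl
  nlinarith

theorem card_le_mul_circuitRank {G : SimpleGraph V} {k : ℕ}
    (hcyc : ∀ x : V, ∃ (w : V) (C : G.Walk w w), C.IsCycle ∧ C.length ≤ k + 1 ∧ x ∈ C.support) :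
    Nat.card V ≤ (k + 1) * G.circuitRank := by
  simpa [circuitRank_bot] using mul_circuitRank_add_ncard_compl_support_le hcyc bot_le

end SimpleGraph

theorem stmt_13 {V : Type*} [Fintype V] (G : SimpleGraph V)
    (n k : ℕ) (hn : Fintype.card V = n)
    (hconn : G.Connected)
    (hcyc : ∀ w : V, ∃ (v : V) (c : G.Walk v v),
      c.IsCycle ∧ c.length ≤ k + 1 ∧ w ∈ c.support) :
    ((n : ℝ) - 1) * ((k : ℝ) + 2) / ((k : ℝ) + 1) ≤ (G.edgeSet.ncard : ℝ) := by
  subst hn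
  have hrank := card_le_mul_circuitRank hcyc
  rw [hconn.circuitRank_eq, Nat.card_eq_fintype_card] at hrank
  have hrankℝ : (Fintype.card V : ℝ) ≤ (k + 1) * (G.edgeSet.ncard - Fintype.card V + 1) := by
    exact_mod_cast hrank
  rw [div_le_iff₀ (by positivity)]
  linarith
end

section
/- The graph H_{k,n} defined in the paper contains no cycle of length k, for n > k ≥ 7. -/
open SimpleGraph

/-- Vertex set of the graph `H_{k,n}`: `A ⊕ B` (two vertices each) plus
`C ⊕ D` (`k-5` and `r` vertices) plus `R₁ ∪ ⋯ ∪ R_t` (`t` sets of `k-4` vertices). -/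
abbrev HVtx (k r t : ℕ) : Type :=
  (Fin 2 ⊕ Fin 2) ⊕ ((Fin (k - 5) ⊕ Fin r) ⊕ (Fin t × Fin (k - 4)))

/-- The vertices `a₁, a₂`. -/
def aVtx (k r t : ℕ) (i : Fin 2) : HVtx k r t := Sum.inl (Sum.inl i)

/-- Underlying (asymmetric) relation of `H_{k,n}`:
a complete graph on `B ∪ C` minus the edge `b₁b₂`, a `K₄` minus the edge `b₁b₂`
on `A ∪ B`, pendant edges `cᵢdᵢ`, and for each `α` a path
`a₁ r_{α,1} r_{α,2} ⋯ r_{α,k-4} a₂` of length `k-3`. -/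
def HRel (k r t : ℕ) : HVtx k r t → HVtx k r t → Prop
  | .inl (.inl i), .inl (.inl j) => i ≠ j                       -- the edge a₁a₂
  | .inl (.inl _), .inl (.inr _) => True                        -- all A–B edges
  | .inl (.inr _), .inr (.inl (.inl _)) => True                 -- all B–C edges
  | .inr (.inl (.inl i)), .inr (.inl (.inl j)) => i ≠ j         -- C is complete
  | .inr (.inl (.inl i)), .inr (.inl (.inr j)) => (i : ℕ) = (j : ℕ)  -- pendant cᵢdᵢ
  | .inl (.inl i), .inr (.inr (_, j)) =>
      ((i : ℕ) = 0 ∧ (j : ℕ) = 0) ∨ ((i : ℕ) = 1 ∧ (j : ℕ) = k - 5)  -- path ends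
  | .inr (.inr (α, i)), .inr (.inr (β, j)) => α = β ∧ (j : ℕ) = (i : ℕ) + 1 -- path edges
  | _, _ => False

/-- The `C_k`-saturated graph `H_{k,n}` of the paper, where
`n = (k-1) + r + t(k-4)`. -/
def Hgraph (k r t : ℕ) : SimpleGraph (HVtx k r t) :=
  SimpleGraph.fromRel (HRel k r t)

/-!
Every vertex of a cycle has exactly two neighbours along it. So the pendant vertices `dᵢ` lie
on no cycle, and a cycle through one interior vertex of a path `P_α` (all of whose interior
vertices have degree two) contains the whole of `P_α`. A cycle avoiding every `R_α` lives on
the `k - 1` vertices of `A ∪ B ∪ C`. A cycle meeting `R_α` meets no other `R_β`, since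
`|P_α ∪ P_β| = 2k - 6 > k`. Leaving `P_α` at `a₁`, the cycle goes to `a₂`, or to some
`b` and then to `a₂`, or to some `b` and then to some `c`: in the first two cases it closes up
on at most `k - 1` vertices, in the last one the vertex after `c` is a `(k + 1)`-st one.
-/

namespace SimpleGraph.Walk

variable {V : Type*} {G : SimpleGraph V}

theorem forall_mem_support_of_closed {u v w : V} (p : G.Walk u v) {F : Set V}
    (hw : w ∈ p.support) (hwF : w ∈ F)
    (hF : ∀ ⦃x y⦄, p.toSubgraph.Adj x y → x ∈ F → y ∈ F) :
    ∀ x ∈ p.support, x ∈ F := by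
  induction p generalizing w with
  | nil =>
    simp only [support_nil, List.mem_singleton] at hw ⊢
    rintro x rfl
    exact hw ▸ hwF
  | @cons a b _ h q ih =>
    have hqF : ∀ ⦃x y⦄, q.toSubgraph.Adj x y → x ∈ F → y ∈ F := fun x y hxy =>
      hF (by simp [hxy])
    have hab : (cons h q).toSubgraph.Adj a b := by simp
    have hq : ∀ x ∈ q.support, x ∈ F := by
      rw [support_cons, List.mem_cons] at hw
      rcases hw with rfl | hw
      · exact ih q.start_mem_support (hF hab hwF) hqF
      · exact ih hw hwF hqF
    rintro x hx
    rw [support_cons, List.mem_cons] at hx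
    rcases hx with rfl | hx
    · exact hF hab.symm (hq _ q.start_mem_support)
    · exact hq x hx

variable {v : V} {c : G.Walk v v}

theorem IsCycle.card_support_toFinset [DecidableEq V] (hc : c.IsCycle) :
    c.support.toFinset.card = c.length := by
  rw [← c.cons_tail_support, List.toFinset_cons,
    Finset.insert_eq_of_mem (List.mem_toFinset.mpr (end_mem_tail_support hc.not_nil)),
    List.toFinset_card_of_nodup hc.support_nodup, List.length_tail, length_support]
  rfl

theorem IsCycle.exists_adj_toSubgraph_ne (hc : c.IsCycle) {u : V} (hu : u ∈ c.support)
    (x : V) : ∃ y, y ≠ x ∧ c.toSubgraph.Adj u y := by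
  obtain ⟨y₁, y₂, hne, heq⟩ :=
    Set.ncard_eq_two.mp (hc.ncard_neighborSet_toSubgraph_eq_two hu)
  have h₁ : c.toSubgraph.Adj u y₁ := by
    rw [← Subgraph.mem_neighborSet, heq]; exact Set.mem_insert _ _
  have h₂ : c.toSubgraph.Adj u y₂ := by
    rw [← Subgraph.mem_neighborSet, heq]; exact Set.mem_insert_of_mem _ rfl
  by_cases h : y₁ = x
  · exact ⟨y₂, fun h' => hne (h.trans h'.symm), h₂⟩
  · exact ⟨y₁, h, h₁⟩

theorem IsCycle.toSubgraph_adj_of_neighborSet_eq (hc : c.IsCycle) {u x y : V}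
    (hu : u ∈ c.support) (h : G.neighborSet u = {x, y}) :
    c.toSubgraph.Adj u x ∧ c.toSubgraph.Adj u y := by
  have hsub := (c.toSubgraph.neighborSet_subset u).trans h.subset
  have heq := Set.eq_of_subset_of_ncard_le hsub
    (by rw [hc.ncard_neighborSet_toSubgraph_eq_two hu]
        exact (Set.ncard_insert_le x {y}).trans (by rw [Set.ncard_singleton]))
    (Set.toFinite _)
  simp only [← Subgraph.mem_neighborSet, heq, Set.mem_insert_iff, Set.mem_singleton_iff, true_or,
    or_true, and_self]

theorem IsCycle.eq_or_eq_of_adj_toSubgraph (hc : c.IsCycle) {u x y z : V}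
    (hx : c.toSubgraph.Adj u x) (hy : c.toSubgraph.Adj u y) (hxy : x ≠ y)
    (hz : c.toSubgraph.Adj u z) : z = x ∨ z = y := by
  have h2 := hc.ncard_neighborSet_toSubgraph_eq_two (c.mem_verts_toSubgraph.mp hx.fst_mem)
  have hsub : ({x, y} : Set V) ⊆ c.toSubgraph.neighborSet u := by
    simp [Set.insert_subset_iff, hx, hy]
  have := Set.eq_of_subset_of_ncard_le hsub (by rw [h2, Set.ncard_pair hxy])
    (Set.finite_of_ncard_ne_zero (by omega))
  rw [← Subgraph.mem_neighborSet, ← this] at hz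
  exact hz

theorem IsCycle.notMem_support_of_subsingleton (hc : c.IsCycle) {u : V}
    (h : (G.neighborSet u).Subsingleton) : u ∉ c.support := by
  intro hu
  have h2 := hc.ncard_neighborSet_toSubgraph_eq_two hu
  have hs := h.anti (c.toSubgraph.neighborSet_subset u)
  have := hs.finite.to_subtype
  have := Set.ncard_le_one_iff_subsingleton.mpr hs
  omega

theorem IsCycle.mem_support_of_thread {p : ℕ → V} {L : ℕ} (hc : c.IsCycle)
    (hp : ∀ j, 0 < j → j < L → G.neighborSet (p j) = {p (j - 1), p (j + 1)})
    {i : ℕ} (hi₀ : 0 < i) (hiL : i < L) (hi : p i ∈ c.support) :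
    ∀ j ≤ L, p j ∈ c.support := by
  have step (j : ℕ) (hj₀ : 0 < j) (hjL : j < L) (hj : p j ∈ c.support) :
      p (j - 1) ∈ c.support ∧ p (j + 1) ∈ c.support :=
    have h := hc.toSubgraph_adj_of_neighborSet_eq hj (hp j hj₀ hjL)
    ⟨c.mem_verts_toSubgraph.mp h.1.snd_mem, c.mem_verts_toSubgraph.mp h.2.snd_mem⟩
  have up (n : ℕ) : i + n ≤ L → p (i + n) ∈ c.support := by
    induction n with
    | zero => exact fun _ => hi
    | succ n ih => exact fun hn => (step _ (by omega) (by omega) (ih (by omega))).2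
  have down (n : ℕ) : n ≤ i → p (i - n) ∈ c.support := by
    induction n with
    | zero => exact fun _ => hi
    | succ n ih =>
      intro hn
      have := (step _ (by omega) (by omega) (ih (by omega))).1
      rwa [Nat.sub_sub] at this
  intro j hj
  rcases le_total i j with hij | hji
  · simpa [Nat.add_sub_cancel' hij] using up (j - i) (by omega)
  · simpa [Nat.sub_sub_self hji] using down (i - j) (by omega)

end SimpleGraph.Walk

section Vertices

variable {k r t : ℕ}

def bVtx (i : Fin 2) : HVtx k r t := .inl (.inr i)

def cVtx (i : Fin (k - 5)) : HVtx k r t := .inr (.inl (.inl i))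

def dVtx (i : Fin r) : HVtx k r t := .inr (.inl (.inr i))

def rVtx (α : Fin t) (i : Fin (k - 4)) : HVtx k r t := .inr (.inr (α, i))

/-- The path `P_α = a₁ r_{α,1} ⋯ r_{α,k-4} a₂`, indexed by `0, …, k - 3`;
larger indices give `a₂`. -/
def pathVtx (α : Fin t) (j : ℕ) : HVtx k r t :=
  if j = 0 then aVtx k r t 0 else if h : j - 1 < k - 4 then rVtx α ⟨j - 1, h⟩ else aVtx k r t 1

def pathSet (α : Fin t) : Finset (HVtx k r t) := (Finset.range (k - 2)).image (pathVtx α)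

theorem pathVtx_of_pos_of_lt (α : Fin t) {j : ℕ} (hj₀ : 0 < j) (hjk : j < k - 3) :
    (pathVtx α j : HVtx k r t) = rVtx α ⟨j - 1, by omega⟩ := by
  rw [pathVtx, if_neg (by omega), dif_pos]

theorem pathVtx_one (α : Fin t) (hk : 5 ≤ k) :
    (pathVtx α 1 : HVtx k r t) = rVtx α ⟨0, by omega⟩ :=
  pathVtx_of_pos_of_lt α one_pos (by omega)

theorem pathVtx_sub_four (α : Fin t) (hk : 5 ≤ k) :
    (pathVtx α (k - 4) : HVtx k r t) = rVtx α ⟨k - 5, by omega⟩ := by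
  rw [pathVtx_of_pos_of_lt α (by omega) (by omega)]; rfl

theorem pathVtx_sub_three (α : Fin t) (hk : 4 ≤ k) : pathVtx α (k - 3) = aVtx k r t 1 := by
  rw [pathVtx, if_neg (by omega), dif_neg (by omega)]

theorem pathVtx_cases (α : Fin t) (j : ℕ) :
    pathVtx α j = aVtx k r t 0 ∨ pathVtx α j = aVtx k r t 1 ∨
      ∃ i : Fin (k - 4), (pathVtx α j : HVtx k r t) = rVtx α i := by
  unfold pathVtx
  split_ifs <;> simp

theorem pathVtx_injOn (α : Fin t) :
    Set.InjOn (pathVtx (k := k) (r := r) α) (Finset.range (k - 2)) := by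
  intro j₁ hj₁ j₂ hj₂ h
  simp only [Finset.coe_range, Set.mem_Iio] at hj₁ hj₂
  unfold pathVtx at h
  split_ifs at h <;> simp [aVtx, rVtx, Fin.ext_iff] at h <;> omega

theorem pathVtx_mem_pathSet (α : Fin t) {j : ℕ} (hj : j < k - 2) :
    pathVtx α j ∈ pathSet (k := k) (r := r) α :=
  Finset.mem_image_of_mem _ (Finset.mem_range.mpr hj)

theorem aVtx_mem_pathSet (hk : 4 ≤ k) (α : Fin t) (m : Fin 2) :
    aVtx k r t m ∈ pathSet α := by
  fin_cases m
  · exact pathVtx_mem_pathSet α (j := 0) (by omega)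
  · exact pathVtx_sub_three α hk ▸ pathVtx_mem_pathSet α (j := k - 3) (by omega)

theorem card_pathSet (α : Fin t) : (pathSet (k := k) (r := r) α).card = k - 2 := by
  rw [pathSet, Finset.card_image_of_injOn (pathVtx_injOn α), Finset.card_range]

theorem bVtx_notMem_pathSet (α : Fin t) (m : Fin 2) :
    bVtx m ∉ pathSet (k := k) (r := r) α := by
  simp only [pathSet, Finset.mem_image, not_exists, not_and]
  intro j _ h
  rcases pathVtx_cases α j with h' | h' | ⟨i, h'⟩ <;> rw [h'] at h <;>
    simp [aVtx, bVtx, rVtx] at h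

theorem cVtx_notMem_pathSet (α : Fin t) (i : Fin (k - 5)) :
    cVtx i ∉ pathSet (r := r) α := by
  simp only [pathSet, Finset.mem_image, not_exists, not_and]
  intro j _ h
  rcases pathVtx_cases α j with h' | h' | ⟨i, h'⟩ <;> rw [h'] at h <;>
    simp [aVtx, cVtx, rVtx] at h

theorem card_pathSet_union {α β : Fin t} (hαβ : α ≠ β) :
    2 * (k - 2) ≤ (pathSet (k := k) (r := r) α ∪ pathSet β).card + 2 := by
  have hinter : pathSet (k := k) (r := r) α ∩ pathSet β ⊆ {aVtx k r t 0, aVtx k r t 1} := by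
    intro x hx
    simp only [Finset.mem_inter, pathSet, Finset.mem_image] at hx
    obtain ⟨⟨j, -, rfl⟩, ⟨j', -, h⟩⟩ := hx
    rcases pathVtx_cases α j with h₁ | h₁ | ⟨i, h₁⟩ <;> rw [h₁] at h ⊢ <;> simp
    rcases pathVtx_cases β j' with h₂ | h₂ | ⟨i', h₂⟩ <;> rw [h₂] at h <;>
      simp [aVtx, rVtx, hαβ.symm] at h
  have := Finset.card_le_card hinter
  have := Finset.card_insert_le (aVtx k r t 0) {aVtx k r t 1}
  have := Finset.card_union_add_card_inter (pathSet (k := k) (r := r) α) (pathSet β)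
  simp only [card_pathSet, Finset.card_singleton] at *
  omega

theorem card_le_of_forall_notMem (hk : 5 ≤ k) (s : Finset (HVtx k r t))
    (hD : ∀ j, dVtx j ∉ s) (hR : ∀ α i, rVtx α i ∉ s) : s.card ≤ k - 1 := by
  have hsub : s ⊆ Finset.univ.image
      (Sum.elim Sum.inl cVtx : (Fin 2 ⊕ Fin 2) ⊕ Fin (k - 5) → HVtx k r t) := by
    intro x hx
    rcases x with (x|(x|x)|⟨α, i⟩)
    · exact Finset.mem_image.mpr ⟨.inl x, Finset.mem_univ _, rfl⟩
    · exact Finset.mem_image.mpr ⟨.inr x, Finset.mem_univ _, rfl⟩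
    · exact absurd hx (hD x)
    · exact absurd hx (hR α i)
  have := (Finset.card_le_card hsub).trans Finset.card_image_le
  simp only [Finset.card_univ, Fintype.card_sum, Fintype.card_fin] at this
  omega

end Vertices

namespace Hgraph

variable {k r t : ℕ}

theorem neighborSet_rVtx (α : Fin t) (i : Fin (k - 4)) :
    (Hgraph k r t).neighborSet (rVtx α i) = {pathVtx α i, pathVtx α (i + 2)} := by
  ext x
  rcases x with ((j|j)|((j|j)|⟨β,j⟩)) <;>
    simp only [Hgraph, HRel, pathVtx, aVtx, rVtx, mem_neighborSet, fromRel_adj,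
      Set.mem_insert_iff, Set.mem_singleton_iff] <;>
    split_ifs <;>
    simp only [ne_eq, Sum.inl.injEq, Sum.inr.injEq, reduceCtorEq, Prod.mk.injEq, Fin.ext_iff,
      Fin.val_zero, Fin.val_one, Fin.isValue, and_false, false_or, or_false, not_false_eq_true,
      true_and, iff_false] at * <;>
    omega

theorem neighborSet_pathVtx (α : Fin t) (j : ℕ) (hj₀ : 0 < j) (hjk : j < k - 3) :
    (Hgraph k r t).neighborSet (pathVtx α j) = {pathVtx α (j - 1), pathVtx α (j + 1)} := by
  rw [pathVtx_of_pos_of_lt α hj₀ hjk, neighborSet_rVtx, show j - 1 + 2 = j + 1 by omega]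

theorem neighborSet_dVtx_subsingleton (j : Fin r) :
    ((Hgraph k r t).neighborSet (dVtx j)).Subsingleton := by
  rintro x hx y hy
  rcases x with ((i|i)|((i|i)|⟨β,i⟩)) <;> rcases y with ((i'|i')|((i'|i')|⟨β',i'⟩)) <;>
    simp_all [Hgraph, HRel, dVtx]; omega

theorem eq_of_adj_aVtx_zero {x : HVtx k r t} (h : (Hgraph k r t).Adj (aVtx k r t 0) x) :
    x = aVtx k r t 1 ∨ (∃ m, x = bVtx m) ∨ ∃ β, x = pathVtx β 1 := by
  rcases x with ((i|i)|((i|i)|⟨β,i⟩)) <;> simp [Hgraph, HRel, aVtx] at h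
  · fin_cases i <;> simp_all [aVtx]
  · exact Or.inr (Or.inl ⟨i, rfl⟩)
  · refine Or.inr (Or.inr ⟨β, ?_⟩)
    rw [pathVtx_of_pos_of_lt β zero_lt_one (by omega)]
    simp [rVtx, Fin.ext_iff, h]

theorem eq_of_adj_bVtx {m : Fin 2} {x : HVtx k r t} (h : (Hgraph k r t).Adj (bVtx m) x) :
    x = aVtx k r t 0 ∨ x = aVtx k r t 1 ∨ ∃ i, x = cVtx i := by
  rcases x with ((i|i)|((i|i)|⟨β,i⟩)) <;> simp_all [Hgraph, HRel, aVtx, bVtx, cVtx]; omega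

theorem eq_of_adj_cVtx {i : Fin (k - 5)} {x : HVtx k r t} (h : (Hgraph k r t).Adj (cVtx i) x) :
    (∃ m, x = bVtx m) ∨ (∃ i', x = cVtx i') ∨ ∃ j, x = dVtx j := by
  rcases x with ((i|i)|((i|i)|⟨β,i⟩)) <;> simp_all [Hgraph, HRel, bVtx, cVtx, dVtx]

section Cycle

variable {v : HVtx k r t} {c : (Hgraph k r t).Walk v v}

theorem pathSet_subset_support (hc : c.IsCycle) {α : Fin t} {i : Fin (k - 4)}
    (hi : rVtx α i ∈ c.support) : pathSet α ⊆ c.support.toFinset := by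
  have hmem := hc.mem_support_of_thread (neighborSet_pathVtx α) (i := i + 1)
    (by omega) (by omega) (by rwa [pathVtx_of_pos_of_lt α (by omega) (by omega)])
  intro x hx
  obtain ⟨j, hj, rfl⟩ := Finset.mem_image.mp hx
  exact List.mem_toFinset.mpr (hmem j (by simp at hj; omega))

theorem toSubgraph_adj_aVtx (hc : c.IsCycle) (hk : 5 ≤ k) {α : Fin t} {i : Fin (k - 4)}
    (hi : rVtx α i ∈ c.support) :
    c.toSubgraph.Adj (aVtx k r t 0) (pathVtx α 1) ∧
      c.toSubgraph.Adj (aVtx k r t 1) (pathVtx α (k - 4)) := by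
  have hP := pathSet_subset_support hc hi
  have hmem (j : ℕ) (hj : j < k - 2) : pathVtx α j ∈ c.support :=
    List.mem_toFinset.mp (hP (pathVtx_mem_pathSet α hj))
  have h₁ := (hc.toSubgraph_adj_of_neighborSet_eq (hmem 1 (by omega))
    (neighborSet_pathVtx α 1 (by omega) (by omega))).1
  have h₂ := (hc.toSubgraph_adj_of_neighborSet_eq (hmem (k - 4) (by omega))
    (neighborSet_pathVtx α (k - 4) (by omega) (by omega))).2
  rw [show k - 4 + 1 = k - 3 by omega, pathVtx_sub_three α (by omega)] at h₂
  exact ⟨h₁.symm, h₂.symm⟩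

theorem rVtx_notMem_support (hc : c.IsCycle) (hlen : c.length = k) (hk : 7 ≤ k)
    {α β : Fin t} {i : Fin (k - 4)} (hi : rVtx α i ∈ c.support) (hβ : β ≠ α)
    (j : Fin (k - 4)) :
    rVtx β j ∉ c.support := by
  intro hj
  have hsub := Finset.union_subset (pathSet_subset_support hc hi) (pathSet_subset_support hc hj)
  have := (card_pathSet_union hβ.symm).trans
    (Nat.add_le_add_right (Finset.card_le_card hsub) 2)
  rw [hc.card_support_toFinset, hlen] at this
  omega

theorem support_subset_of_closed (hk : 4 ≤ k) {α : Fin t} {F : Finset (HVtx k r t)}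
    (hPF : pathSet α ⊆ F) (ha₀ : aVtx k r t 0 ∈ c.support)
    (h₀ : ∀ x, c.toSubgraph.Adj (aVtx k r t 0) x → x ∈ F)
    (h₁ : ∀ x, c.toSubgraph.Adj (aVtx k r t 1) x → x ∈ F)
    (hF : ∀ u ∈ F, u ∉ pathSet α → ∀ x, c.toSubgraph.Adj u x → x ∈ F) :
    c.support.toFinset ⊆ F := by
  intro x hx
  refine c.forall_mem_support_of_closed (F := ↑F) ha₀
    (hPF (aVtx_mem_pathSet hk α 0)) ?_ x (List.mem_toFinset.mp hx)
  intro u y huy hu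
  by_cases hu' : u ∈ pathSet α
  · obtain ⟨j, hj, rfl⟩ := Finset.mem_image.mp hu'
    rw [Finset.mem_range] at hj
    by_cases hj₀ : j = 0
    · subst hj₀; exact h₀ y huy
    by_cases hjk : j = k - 3
    · subst hjk; rw [pathVtx_sub_three α hk] at huy; exact h₁ y huy
    have hy := huy.adj_sub
    rw [← mem_neighborSet, neighborSet_pathVtx α j (by omega) (by omega)] at hy
    rcases hy with rfl | rfl <;> exact hPF (pathVtx_mem_pathSet α (by omega))
  · exact hF u hu hu' y huy

theorem not_adj_toSubgraph_aVtx_aVtx (hc : c.IsCycle) (hlen : c.length = k) (hk : 5 ≤ k)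
    {α : Fin t} (h₀ : c.toSubgraph.Adj (aVtx k r t 0) (pathVtx α 1))
    (h₁ : c.toSubgraph.Adj (aVtx k r t 1) (pathVtx α (k - 4))) :
    ¬ c.toSubgraph.Adj (aVtx k r t 0) (aVtx k r t 1) := by
  intro h
  have hne₀ : pathVtx α 1 ≠ aVtx k r t 1 := by rw [pathVtx_one α hk]; simp [rVtx, aVtx]
  have hne₁ : pathVtx α (k - 4) ≠ aVtx k r t 0 := by
    rw [pathVtx_sub_four α hk]; simp [rVtx, aVtx]
  have hsub := support_subset_of_closed (by omega) subset_rfl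
    (c.mem_verts_toSubgraph.mp h.fst_mem)
    (fun x hx => by
      rcases hc.eq_or_eq_of_adj_toSubgraph h₀ h hne₀ hx with rfl | rfl
      · exact pathVtx_mem_pathSet α (by omega)
      · exact aVtx_mem_pathSet (by omega) α 1)
    (fun x hx => by
      rcases hc.eq_or_eq_of_adj_toSubgraph h₁ h.symm hne₁ hx with rfl | rfl
      · exact pathVtx_mem_pathSet α (by omega)
      · exact aVtx_mem_pathSet (by omega) α 0)
    (fun u hu hu' => absurd hu hu')
  have := Finset.card_le_card hsub
  rw [hc.card_support_toFinset, hlen, card_pathSet] at this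
  omega

theorem not_adj_toSubgraph_bVtx_aVtx (hc : c.IsCycle) (hlen : c.length = k) (hk : 5 ≤ k)
    {α : Fin t} (h₀ : c.toSubgraph.Adj (aVtx k r t 0) (pathVtx α 1))
    (h₁ : c.toSubgraph.Adj (aVtx k r t 1) (pathVtx α (k - 4))) {m : Fin 2}
    (h₀b : c.toSubgraph.Adj (aVtx k r t 0) (bVtx m)) :
    ¬ c.toSubgraph.Adj (bVtx m) (aVtx k r t 1) := by
  intro hb₁
  have hne₀ : (pathVtx α 1 : HVtx k r t) ≠ bVtx m := by
    rw [pathVtx_one α hk]; simp [rVtx, bVtx]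
  have hne₁ : (pathVtx α (k - 4) : HVtx k r t) ≠ bVtx m := by
    rw [pathVtx_sub_four α hk]; simp [rVtx, bVtx]
  have hsub := support_subset_of_closed (F := insert (bVtx m) (pathSet α)) (by omega)
    (Finset.subset_insert _ _) (c.mem_verts_toSubgraph.mp h₀b.fst_mem)
    (fun x hx => by
      rcases hc.eq_or_eq_of_adj_toSubgraph h₀ h₀b hne₀ hx with rfl | rfl
      · exact Finset.mem_insert_of_mem (pathVtx_mem_pathSet α (by omega))
      · exact Finset.mem_insert_self _ _)
    (fun x hx => by
      rcases hc.eq_or_eq_of_adj_toSubgraph h₁ hb₁.symm hne₁ hx with rfl | rfl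
      · exact Finset.mem_insert_of_mem (pathVtx_mem_pathSet α (by omega))
      · exact Finset.mem_insert_self _ _)
    (fun u hu hu' x hx => by
      obtain rfl : u = bVtx m := by simpa [hu'] using hu
      rcases hc.eq_or_eq_of_adj_toSubgraph h₀b.symm hb₁ (by simp [aVtx]) hx with rfl | rfl <;>
        exact Finset.mem_insert_of_mem (aVtx_mem_pathSet (by omega) α _))
  have := (Finset.card_le_card hsub).trans (Finset.card_insert_le _ _)
  rw [hc.card_support_toFinset, hlen, card_pathSet] at this
  omega

theorem not_adj_toSubgraph_bVtx_cVtx (hc : c.IsCycle) (hlen : c.length = k) (hk : 5 ≤ k)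
    (hD : ∀ j, dVtx j ∉ c.support) {α : Fin t} (hP : pathSet α ⊆ c.support.toFinset)
    {m : Fin 2} {i : Fin (k - 5)} :
    ¬ c.toSubgraph.Adj (bVtx m) (cVtx i) := by
  intro hbc
  obtain ⟨z, hzb, hcz⟩ :=
    hc.exists_adj_toSubgraph_ne (c.mem_verts_toSubgraph.mp hbc.snd_mem) (bVtx m)
  have hz : z ∉ insert (cVtx i) (insert (bVtx m) (pathSet α)) := by
    simp only [Finset.mem_insert, not_or]
    refine ⟨fun h => hcz.adj_sub.ne h.symm, hzb, ?_⟩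
    rcases eq_of_adj_cVtx hcz.adj_sub with ⟨m', rfl⟩ | ⟨i', rfl⟩ | ⟨j, rfl⟩
    · exact bVtx_notMem_pathSet α m'
    · exact cVtx_notMem_pathSet α i'
    · exact absurd (c.mem_verts_toSubgraph.mp hcz.snd_mem) (hD j)
  have hi : cVtx (r := r) i ∉ insert (bVtx m) (pathSet α) := by
    simp only [Finset.mem_insert, not_or]
    exact ⟨by simp [cVtx, bVtx], cVtx_notMem_pathSet α i⟩
  have hsub : insert z (insert (cVtx i) (insert (bVtx m) (pathSet α))) ⊆ c.support.toFinset := by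
    simp only [Finset.insert_subset_iff, List.mem_toFinset]
    exact ⟨c.mem_verts_toSubgraph.mp hcz.snd_mem, c.mem_verts_toSubgraph.mp hbc.snd_mem,
      c.mem_verts_toSubgraph.mp hbc.fst_mem, hP⟩
  have := Finset.card_le_card hsub
  rw [Finset.card_insert_of_notMem hz, Finset.card_insert_of_notMem hi,
    Finset.card_insert_of_notMem (bVtx_notMem_pathSet α m), card_pathSet,
    hc.card_support_toFinset, hlen] at this
  omega

end Cycle

end Hgraph

theorem stmt_15_general (k r t : ℕ) (hk : 7 ≤ k) :
    ¬ hasCycleLength (Hgraph k r t) k := by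
  rintro ⟨v, c, hc, hlen⟩
  have hD : ∀ j, dVtx j ∉ c.support := fun j =>
    hc.notMem_support_of_subsingleton (Hgraph.neighborSet_dVtx_subsingleton j)
  obtain ⟨α, i, hi⟩ : ∃ α i, rVtx α i ∈ c.support := by
    by_contra! hR
    have := card_le_of_forall_notMem (by omega) c.support.toFinset (by simpa using hD)
      (by simpa using hR)
    rw [hc.card_support_toFinset, hlen] at this
    omega
  obtain ⟨h₀, h₁⟩ := Hgraph.toSubgraph_adj_aVtx hc (by omega) hi
  obtain ⟨z, hz, h₀z⟩ := hc.exists_adj_toSubgraph_ne (c.mem_verts_toSubgraph.mp h₀.fst_mem)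
    (pathVtx α 1)
  rcases Hgraph.eq_of_adj_aVtx_zero h₀z.adj_sub with rfl | ⟨m, rfl⟩ | ⟨β, rfl⟩
  · exact Hgraph.not_adj_toSubgraph_aVtx_aVtx hc hlen (by omega) h₀ h₁ h₀z
  · obtain ⟨y, hy, hby⟩ := hc.exists_adj_toSubgraph_ne
      (c.mem_verts_toSubgraph.mp h₀z.snd_mem) (aVtx k r t 0)
    rcases Hgraph.eq_of_adj_bVtx hby.adj_sub with rfl | rfl | ⟨i, rfl⟩
    · exact hy rfl
    · exact Hgraph.not_adj_toSubgraph_bVtx_aVtx hc hlen (by omega) h₀ h₁ h₀z hby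
    · exact Hgraph.not_adj_toSubgraph_bVtx_cVtx hc hlen (by omega) hD
        (Hgraph.pathSet_subset_support hc hi) hby
  · have hβ : β ≠ α := by rintro rfl; exact hz rfl
    refine Hgraph.rVtx_notMem_support hc hlen hk hi hβ ⟨0, by omega⟩ ?_
    rw [← pathVtx_one β (by omega)]
    exact c.mem_verts_toSubgraph.mp h₀z.snd_mem

theorem stmt_15 (k r t : ℕ) (hk : 7 ≤ k) (ht : 1 ≤ t) (hr : r ≤ k - 5) :
    ¬ hasCycleLength (Hgraph k r t) k :=
  stmt_15_general k r t hk
end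

section
/- For all n ≥ k + 4 with k ≥ 5, ssat(n, C_k) ≤ n + ⌊(n−7)/(k−3)⌋ + k − 3; in particular ssat(n, C₆) ≤ ⌈4n/3⌉ for n ≥ 10. -/
open SimpleGraph

/-!
The bound comes from an explicit graph: the wheel on `0, …, k-1` (hub `0`, rim `1, …, k-1`),
`t` internally disjoint `1`–`2` paths of length `k-2` ("threads") and a pendant edge ("spike") at
each of `0, …, r-1`. With `n = k + t(k-3) + r` and `4 ≤ r ≤ k` it has
`2(k-1) + t(k-2) + r ≤ n + ⌊(n-7)/(k-3)⌋ + k - 3` edges.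

It is `C_k`-semisaturated because any two non-adjacent vertices are joined by a path with `k-1`
edges. Leave each of them along its spike, or along its thread in a suitable direction, up to the
first wheel vertex; the two exits are disjoint and use at most `k-3` edges together (or `k-2`,
ending at the adjacent rim vertices `1` and `2`). Between two distinct wheel vertices there is a
path of every length from `2` to `k-1`: walk down the rim from both ends, along disjoint arcs, and
meet at the hub.
-/

namespace SimpleGraph

variable {V W : Type*} {G : SimpleGraph V} {u v w : V}

theorem Walk.IsPath.append {p : G.Walk u v} {q : G.Walk v w} (hp : p.IsPath) (hq : q.IsPath)
    (h : ∀ x ∈ p.support, x ∈ q.support → x = v) : (p.append q).IsPath := by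
  have hq' := hq.support_nodup
  rw [← q.cons_tail_support, List.nodup_cons] at hq'
  rw [Walk.isPath_def, Walk.support_append, List.nodup_append]
  refine ⟨hp.support_nodup, hq'.2, fun x hx y hy hxy => ?_⟩
  subst hxy
  obtain rfl := h x hx (List.mem_of_mem_tail hy)
  exact hq'.1 hy

theorem Walk.exists_isPath_of_fn (g : ℕ → V) (L : ℕ) (h0 : g 0 = u) (hL : g L = v)
    (hadj : ∀ i < L, G.Adj (g i) (g (i + 1))) (hinj : ∀ i ≤ L, ∀ j ≤ L, g i = g j → i = j) :
    ∃ p : G.Walk u v, p.IsPath ∧ p.length = L ∧ p.support = (List.range (L + 1)).map g := by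
  subst h0 hL
  have hchain : ((List.range (L + 1)).map g).IsChain G.Adj :=
    List.isChain_map g |>.2 <| (List.isChain_range_succ _ L).2 hadj
  have hne : (List.range (L + 1)).map g ≠ [] := by simp
  refine ⟨(Walk.ofSupport _ hne hchain).copy (by simp) (by simp [List.getLast_range]), ?_, ?_, ?_⟩
  · rw [Walk.isPath_copy, Walk.isPath_def, Walk.support_ofSupport]
    exact List.nodup_range.map_on fun i hi j hj =>
      hinj i (Nat.lt_succ_iff.1 (List.mem_range.1 hi)) j (Nat.lt_succ_iff.1 (List.mem_range.1 hj))
  · simp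
  · simp

theorem Walk.forall_mem_support_of_adj {P : V → Prop} (hP : ∀ a b, G.Adj a b → P a)
    (p : G.Walk u v) (huv : u ≠ v) : ∀ x ∈ p.support, P x := by
  intro x hx
  obtain ⟨e, he, hxe⟩ := (Walk.mem_support_iff_exists_mem_edges_of_not_nil
    (Walk.not_nil_of_ne huv)).1 hx
  induction e using Sym2.ind with
  | _ a b =>
    rcases Sym2.mem_iff.1 hxe with rfl | rfl
    · exact hP _ _ (p.adj_of_mem_edges he)
    · exact hP _ _ (p.adj_of_mem_edges he).symm

theorem Walk.exists_comap_of_support_subset {f : W → V} (hf : Function.Injective f) {x y : V}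
    (p : G.Walk x y) (hp : ∀ z ∈ p.support, z ∈ Set.range f) {a b : W} (ha : f a = x)
    (hb : f b = y) : ∃ q : (G.comap f).Walk a b, q.support.map f = p.support := by
  induction p generalizing a with
  | nil =>
    obtain rfl := hf (ha.trans hb.symm)
    exact ⟨.nil, by simp [ha]⟩
  | cons h p ih =>
    obtain ⟨c, hc⟩ := hp _ (List.mem_cons_of_mem _ p.start_mem_support)
    obtain ⟨q, hq⟩ := ih (fun z hz => hp z (by simp [hz])) hc hb
    exact ⟨.cons (by simpa [ha, hc] using h) q, by simp [hq, ha]⟩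

theorem ncard_edgeSet_comap_le {G : SimpleGraph V} {f : W → V} (hf : Function.Injective f)
    (hG : G.edgeSet.Finite) : (G.comap f).edgeSet.ncard ≤ G.edgeSet.ncard := by
  refine Set.ncard_le_ncard_of_injOn (Sym2.map f) ?_ (Sym2.map.injective hf).injOn hG
  intro e he
  induction e using Sym2.ind with
  | _ a b => simpa using he

theorem isCkSemisaturated_of_forall_isPath {k : ℕ}
    (h : ∀ u v, u ≠ v → ¬ G.Adj u v → ∃ p : G.Walk u v, p.IsPath ∧ p.length + 1 = k) :
    IsCkSemisaturated k G := by
  intro u v huv hnadj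
  obtain ⟨p, hp, hlen⟩ := h u v huv hnadj
  have hle : G ≤ addEdge G u v := le_sup_left
  have hvu : (addEdge G u v).Adj v u := Or.inr ⟨Sym2.eq_swap, huv.symm⟩
  refine ⟨v, .cons hvu (p.mapLe hle), ?_, by simpa using hlen, by simp [Sym2.eq_swap]⟩
  rw [Walk.cons_isCycle_iff, Walk.edges_mapLe_eq_edges]
  exact ⟨hp.mapLe hle, fun he => hnadj (p.adj_of_mem_edges he).symm⟩

theorem isCkSemisaturated_comap {G : SimpleGraph V} {f : W → V} {k : ℕ}
    (hf : Function.Injective f) (hG : ∀ a b, G.Adj a b → a ∈ Set.range f)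
    (h : ∀ a b, a ∈ Set.range f → b ∈ Set.range f → a ≠ b → ¬ G.Adj a b →
      ∃ p : G.Walk a b, p.IsPath ∧ p.length + 1 = k) :
    IsCkSemisaturated k (G.comap f) := by
  refine isCkSemisaturated_of_forall_isPath fun u v huv hnadj => ?_
  obtain ⟨p, hp, hl⟩ := h (f u) (f v) ⟨u, rfl⟩ ⟨v, rfl⟩ (hf.ne huv) hnadj
  obtain ⟨q, hq⟩ := p.exists_comap_of_support_subset hf
    (p.forall_mem_support_of_adj hG (hf.ne huv)) rfl rfl
  refine ⟨q, (Walk.isPath_def _).2 (List.Nodup.of_map f (hq ▸ hp.support_nodup)), ?_⟩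
  rw [← hl, ← Walk.length_support, ← Walk.length_support, ← hq, List.length_map]

def HasExit (G : SimpleGraph V) (X S : Set V) (u w : V) (ℓ : ℕ) : Prop :=
  ∃ p : G.Walk u w, p.IsPath ∧ p.length = ℓ ∧ ∀ x ∈ p.support, x = w ∨ x ∈ S \ X

theorem HasExit.refl (X S : Set V) (u : V) : G.HasExit X S u u 0 :=
  ⟨.nil, .nil, rfl, by simp⟩

theorem HasExit.of_fn {X S : Set V} (g : ℕ → V) (ℓ : ℕ) (h0 : g 0 = u) (hℓ : g ℓ = w)
    (hadj : ∀ i < ℓ, G.Adj (g i) (g (i + 1))) (hinj : ∀ i ≤ ℓ, ∀ j ≤ ℓ, g i = g j → i = j)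
    (hS : ∀ i < ℓ, g i ∈ S \ X) : G.HasExit X S u w ℓ := by
  obtain ⟨p, hp, hl, hs⟩ := Walk.exists_isPath_of_fn g ℓ h0 hℓ hadj hinj
  refine ⟨p, hp, hl, fun x hx => ?_⟩
  rw [hs, List.mem_map] at hx
  obtain ⟨i, hi, rfl⟩ := hx
  rw [List.mem_range] at hi
  rcases Nat.lt_succ_iff_lt_or_eq.1 hi with hi | rfl
  · exact Or.inr (hS i hi)
  · exact Or.inl hℓ

theorem HasExit.exists_isPath {X S₁ S₂ : Set V} {w₁ w₂ : V} {ℓ₁ ℓ₂ : ℕ}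
    (h₁ : G.HasExit X S₁ u w₁ ℓ₁) (h₂ : G.HasExit X S₂ v w₂ ℓ₂) (hS : Disjoint S₁ S₂)
    (q : G.Walk w₁ w₂) (hq : q.IsPath) (hqX : ∀ x ∈ q.support, x ∈ X) :
    ∃ p : G.Walk u v, p.IsPath ∧ p.length = ℓ₁ + q.length + ℓ₂ := by
  obtain ⟨p₁, hp₁, rfl, hs₁⟩ := h₁
  obtain ⟨p₂, hp₂, rfl, hs₂⟩ := h₂
  have hw₂ : w₂ ∈ X := hqX _ q.end_mem_support
  have hq₂ : (q.append p₂.reverse).IsPath := by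
    refine hq.append hp₂.reverse fun x hxq hx => ?_
    rw [Walk.support_reverse, List.mem_reverse] at hx
    exact (hs₂ x hx).resolve_right fun h => h.2 (hqX x hxq)
  refine ⟨p₁.append (q.append p₂.reverse), hp₁.append hq₂ fun x hx₁ hx => ?_,
    by simp only [Walk.length_append, Walk.length_reverse, Nat.add_assoc]⟩
  refine (hs₁ x hx₁).resolve_right fun ⟨hxS₁, hxX⟩ => ?_
  rw [Walk.support_append, List.mem_append, Walk.support_reverse] at hx
  rcases hx with hx | hx
  · exact hxX (hqX x hx)
  · rcases hs₂ x (List.mem_reverse.1 (List.mem_of_mem_tail hx)) with rfl | ⟨hxS₂, -⟩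
    · exact hxX hw₂
    · exact hS.ne_of_mem hxS₁ hxS₂ rfl

def graphOfPairs (E : Finset (V × V)) : SimpleGraph V :=
  fromEdgeSet ((fun e : V × V => s(e.1, e.2)) '' E)

theorem graphOfPairs_adj {E : Finset (V × V)} {a b : V} :
    (graphOfPairs E).Adj a b ↔ ((a, b) ∈ E ∨ (b, a) ∈ E) ∧ a ≠ b := by
  simp only [graphOfPairs, fromEdgeSet_adj, Set.mem_image, Finset.mem_coe, Prod.exists,
    Sym2.eq_iff]
  aesop

theorem graphOfPairs_mono {E F : Finset (V × V)} (h : E ⊆ F) : graphOfPairs E ≤ graphOfPairs F :=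
  fromEdgeSet_mono (Set.image_mono (Finset.coe_subset.2 h))

theorem ncard_edgeSet_graphOfPairs_le (E : Finset (V × V)) :
    (graphOfPairs E).edgeSet.ncard ≤ E.card := by
  rw [graphOfPairs, edgeSet_fromEdgeSet]
  calc _ ≤ ((fun e : V × V => s(e.1, e.2)) '' E).ncard :=
        Set.ncard_le_ncard Set.sdiff_subset (E.finite_toSet.image _)
    _ ≤ E.card := (Set.ncard_image_le E.finite_toSet).trans (Set.ncard_coe_finset E).le

theorem edgeSet_graphOfPairs_finite (E : Finset (V × V)) :
    (graphOfPairs E).edgeSet.Finite := by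
  rw [graphOfPairs, edgeSet_fromEdgeSet]
  exact (E.finite_toSet.image _).subset Set.sdiff_subset

end SimpleGraph

theorem Nat.mul_add_inj_of_lt {c p p' j j' : ℕ} (hj : j < c) (hj' : j' < c)
    (h : p * c + j = p' * c + j') : p = p' ∧ j = j' := by
  have hdiv : ∀ {p j}, j < c → (p * c + j) / c = p := fun hj => by
    rw [Nat.add_comm, Nat.add_mul_div_right _ _ (by omega), Nat.div_eq_of_lt hj, zero_add]
  obtain rfl : p = p' := by rw [← hdiv (p := p) hj, h, hdiv hj']
  omega

namespace ThreadedWheel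

def wheelEdges (k : ℕ) : Finset (ℕ × ℕ) :=
  (Finset.Ioo 0 k).image (fun b => (0, b)) ∪ (Finset.Ioo 0 (k - 1)).image (fun a => (a, a + 1)) ∪
    {(1, k - 1)}

def wheel (k : ℕ) : SimpleGraph ℕ := graphOfPairs (wheelEdges k)

variable {k t r : ℕ}

theorem wheel_adj_iff {a b : ℕ} : (wheel k).Adj a b ↔ a ≠ b ∧
    ((a = 0 ∧ 0 < b ∧ b < k) ∨ (b = 0 ∧ 0 < a ∧ a < k) ∨ (0 < a ∧ b = a + 1 ∧ b < k) ∨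
      (0 < b ∧ a = b + 1 ∧ a < k) ∨ (a = 1 ∧ b = k - 1) ∨ (b = 1 ∧ a = k - 1)) := by
  simp only [wheel, graphOfPairs_adj, wheelEdges, Finset.mem_union, Finset.mem_image,
    Finset.mem_Ioo, Finset.mem_singleton, Prod.ext_iff]
  constructor
  · rintro ⟨h, hne⟩
    refine ⟨hne, ?_⟩
    rcases h with ((⟨x, hx, h1, h2⟩ | ⟨x, hx, h1, h2⟩) | ⟨h1, h2⟩) |
      ((⟨x, hx, h1, h2⟩ | ⟨x, hx, h1, h2⟩) | ⟨h1, h2⟩) <;> omega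
  · rintro ⟨hne, h⟩
    refine ⟨?_, hne⟩
    rcases h with h | h | h | h | h | h
    · exact Or.inl (Or.inl (Or.inl ⟨b, by omega, by omega, by omega⟩))
    · exact Or.inr (Or.inl (Or.inl ⟨a, by omega, by omega, by omega⟩))
    · exact Or.inl (Or.inl (Or.inr ⟨a, by omega, by omega, by omega⟩))
    · exact Or.inr (Or.inl (Or.inr ⟨b, by omega, by omega, by omega⟩))
    · exact Or.inl (Or.inr (by omega))
    · exact Or.inr (Or.inr (by omega))

-- `i` steps down the rim `1, …, k-1` from `x`, wrapping around from `1` to `k-1`.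
def rimDown (k x i : ℕ) : ℕ := if i < x then x - i else x + k - 1 - i

theorem hasExit_rimDown {x a : ℕ} (hx : 0 < x) (hxk : x < k) (ha : a ≤ k - 2) :
    (wheel k).HasExit {0} (rimDown k x '' Set.Iic a) x 0 (a + 1) := by
  refine HasExit.of_fn (fun i => if i ≤ a then rimDown k x i else 0) (a + 1)
    (by simp [rimDown, hx]) (by simp) (fun i hi => ?_) (fun i hi j hj h => ?_) (fun i hi => ?_)
  · rw [wheel_adj_iff]; simp only [rimDown]; split_ifs <;> omega
  · simp only [rimDown] at h; split_ifs at h <;> omega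
  · have hia : i ≤ a := Nat.lt_succ_iff.1 hi
    refine ⟨⟨i, hia, (if_pos hia).symm⟩, ?_⟩
    simp only [if_pos hia, rimDown, Set.mem_singleton_iff]
    split_ifs <;> omega

theorem disjoint_rimDown {x y a b : ℕ} (hyx : y < x) (ha : a < x - y)
    (hb : b + (x - y) ≤ k - 2) :
    Disjoint (rimDown k x '' Set.Iic a) (rimDown k y '' Set.Iic b) := by
  rw [Set.disjoint_left]
  rintro _ ⟨i, hi, rfl⟩ ⟨j, hj, h⟩
  simp only [Set.mem_Iic, rimDown] at hi hj h
  split_ifs at h <;> omega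

theorem exists_wheel_path {x y L : ℕ} (hx : x < k) (hy : y < k) (hxy : x ≠ y) (hL : 2 ≤ L)
    (hLk : L ≤ k - 1) : ∃ q : (wheel k).Walk x y, q.IsPath ∧ q.length = L := by
  wlog hyx : y < x generalizing x y
  · obtain ⟨q, hq, hl⟩ := this hy hx hxy.symm (by omega)
    exact ⟨q.reverse, hq.reverse, by simpa⟩
  suffices ∃ (S₁ S₂ : Set ℕ) (ℓ₁ ℓ₂ : ℕ), (wheel k).HasExit {0} S₁ x 0 ℓ₁ ∧
      (wheel k).HasExit {0} S₂ y 0 ℓ₂ ∧ Disjoint S₁ S₂ ∧ ℓ₁ + ℓ₂ = L by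
    obtain ⟨S₁, S₂, ℓ₁, ℓ₂, h₁, h₂, hS, hℓ⟩ := this
    obtain ⟨q, hq, hl⟩ := h₁.exists_isPath h₂ hS .nil .nil (by simp)
    exact ⟨q, hq, by simpa [hℓ] using hl⟩
  rcases Nat.eq_zero_or_pos y with rfl | hy0
  · exact ⟨_, ∅, L - 1 + 1, 0, hasExit_rimDown (by omega) hx (by omega), .refl _ _ _,
      Set.disjoint_empty _, by omega⟩
  · obtain ⟨a, b, hab, ha, hb⟩ : ∃ a b, a + b + 2 = L ∧ a < x - y ∧ b + (x - y) ≤ k - 2 :=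
      ⟨min (L - 2) (x - y - 1), L - 2 - min (L - 2) (x - y - 1), by omega, by omega, by omega⟩
    exact ⟨_, _, a + 1, b + 1, hasExit_rimDown (by omega) hx (by omega),
      hasExit_rimDown hy0 hy (by omega), disjoint_rimDown hyx ha hb, by omega⟩

/- The paper's `H²_{k,n}(W_k^r)` with `Q = {0, …, r-1}`, on the vertices `0, …, n-1` where
`n = k + t(k-3) + r`: the `p`-th thread is `thread k p 0 = 1, …, thread k p (k-2) = 2`, its
inner vertices being `k + p(k-3), …, k + p(k-3) + (k-4)`, and `spike k t i` is the pendant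
vertex at `i`. -/
def thread (k p m : ℕ) : ℕ :=
  if m = 0 then 1 else if m = k - 2 then 2 else k + p * (k - 3) + (m - 1)

def spike (k t i : ℕ) : ℕ := k + t * (k - 3) + i

def threadEdges (k t : ℕ) : Finset (ℕ × ℕ) :=
  (Finset.range t ×ˢ Finset.range (k - 2)).image fun q =>
    (thread k q.1 q.2, thread k q.1 (q.2 + 1))

def spikeEdges (k t r : ℕ) : Finset (ℕ × ℕ) := (Finset.range r).image fun i => (i, spike k t i)

def threadedWheel (k t r : ℕ) : SimpleGraph ℕ :=
  graphOfPairs (wheelEdges k ∪ threadEdges k t ∪ spikeEdges k t r)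

theorem wheel_le_threadedWheel : wheel k ≤ threadedWheel k t r :=
  graphOfPairs_mono (Finset.union_subset_left Finset.subset_union_left)

theorem threadedWheel_adj_thread {p m m' : ℕ} (hk : 5 ≤ k) (hp : p < t) (hm : m + 1 ≤ k - 2)
    (hm' : m' = m + 1) : (threadedWheel k t r).Adj (thread k p m) (thread k p m') := by
  subst hm'
  refine graphOfPairs_adj.2 ⟨Or.inl ?_, ?_⟩
  · simp only [Finset.mem_union, threadEdges, Finset.mem_image, Finset.mem_product,
      Finset.mem_range]
    exact Or.inl (Or.inr ⟨(p, m), ⟨hp, by dsimp only; omega⟩, rfl⟩)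
  · unfold thread; grind

theorem threadedWheel_adj_spike {i : ℕ} (hk : 0 < k) (hi : i < r) :
    (threadedWheel k t r).Adj i (spike k t i) := by
  refine graphOfPairs_adj.2 ⟨Or.inl ?_, by simp only [spike]; omega⟩
  simp only [Finset.mem_union, spikeEdges, Finset.mem_image, Finset.mem_range]
  exact Or.inr ⟨i, hi, rfl⟩

theorem thread_inj {p p' m m' : ℕ} (hm : 0 < m) (hmk : m < k - 2) (hm' : 0 < m')
    (hmk' : m' < k - 2) (h : thread k p m = thread k p' m') : p = p' ∧ m = m' := by
  simp only [thread, if_neg hm.ne', if_neg hmk.ne, if_neg hm'.ne', if_neg hmk'.ne] at h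
  have := Nat.mul_add_inj_of_lt (c := k - 3) (p := p) (p' := p') (j := m - 1) (j' := m' - 1)
    (by omega) (by omega) (by omega)
  omega

theorem thread_injective (hk : 5 ≤ k) (p : ℕ) : Function.Injective (thread k p) := by
  intro m m' h
  unfold thread at h; grind

theorem le_thread {p m : ℕ} (hm : 0 < m) (hmk : m < k - 2) : k ≤ thread k p m := by
  unfold thread; grind

theorem thread_lt {p m : ℕ} (hk : 5 ≤ k) (hp : p < t) (hm : m ≤ k - 2) :
    thread k p m < k + t * (k - 3) := by
  have := Nat.mul_le_mul_right (k - 3) (Nat.succ_le_of_lt hp)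
  rw [Nat.succ_mul] at this
  unfold thread; grind

theorem hasExit_thread_down {p m : ℕ} (hk : 5 ≤ k) (hp : p < t) (hm : m < k - 2) :
    (threadedWheel k t r).HasExit (Set.Iio k) (thread k p '' Set.Ioc 0 m) (thread k p m) 1
      m := by
  refine HasExit.of_fn (fun i => thread k p (m - i)) m (by simp) (by simp [thread])
    (fun i hi => (threadedWheel_adj_thread hk hp (by omega) (by omega)).symm)
    (fun i hi j hj h => by have := thread_injective hk p h; omega)
    (fun i hi => ⟨⟨m - i, ⟨by omega, by omega⟩, rfl⟩, ?_⟩)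
  exact not_lt.2 (le_thread (by omega) (by omega))

theorem hasExit_thread_up {p m : ℕ} (hk : 5 ≤ k) (hp : p < t) (hm : 0 < m) (hmk : m ≤ k - 2) :
    (threadedWheel k t r).HasExit (Set.Iio k) (thread k p '' Set.Ico m (k - 2)) (thread k p m) 2
      (k - 2 - m) := by
  refine HasExit.of_fn (fun i => thread k p (m + i)) (k - 2 - m) (by simp)
    (by simp only [thread]; grind)
    (fun i hi => threadedWheel_adj_thread hk hp (by omega) (by omega))
    (fun i hi j hj h => by have := thread_injective hk p h; omega)
    (fun i hi => ⟨⟨m + i, ⟨by omega, by omega⟩, rfl⟩, ?_⟩)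
  exact not_lt.2 (le_thread (by omega) (by omega))

theorem hasExit_spike {i : ℕ} (hk : 0 < k) (hi : i < r) :
    (threadedWheel k t r).HasExit (Set.Iio k) {spike k t i} (spike k t i) i 1 :=
  HasExit.of_fn (fun j => if j = 0 then spike k t i else i) 1 (by simp) (by simp)
    (fun j hj => by simpa [show j = 0 by omega] using (threadedWheel_adj_spike hk hi).symm)
    (fun j hj j' hj' h => by unfold spike at h; grind)
    fun j hj => by
      obtain rfl : j = 0 := by omega
      exact ⟨if_pos rfl, by rw [if_pos rfl, Set.mem_Iio, spike]; omega⟩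

theorem exists_path_of_hasExit {S₁ S₂ : Set ℕ} {u v w₁ w₂ ℓ₁ ℓ₂ : ℕ} (hk : 5 ≤ k)
    (h₁ : (threadedWheel k t r).HasExit (Set.Iio k) S₁ u w₁ ℓ₁)
    (h₂ : (threadedWheel k t r).HasExit (Set.Iio k) S₂ v w₂ ℓ₂) (hS : Disjoint S₁ S₂)
    (hw₁ : w₁ < k) (hw₂ : w₂ < k) (hw : w₁ ≠ w₂)
    (hℓ : ℓ₁ + ℓ₂ + 3 ≤ k ∨ ℓ₁ + ℓ₂ + 2 = k ∧ (wheel k).Adj w₁ w₂) :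
    ∃ p : (threadedWheel k t r).Walk u v, p.IsPath ∧ p.length + 1 = k := by
  obtain ⟨q, hq, hl⟩ : ∃ q : (wheel k).Walk w₁ w₂, q.IsPath ∧ q.length = k - 1 - ℓ₁ - ℓ₂ := by
    rcases hℓ with hℓ | ⟨hℓ, hadj : (wheel k).Adj w₁ w₂⟩
    · exact exists_wheel_path hw₁ hw₂ hw (by omega) (by omega)
    · exact ⟨hadj.toWalk, hadj.isPath_toWalk, by rw [hadj.length_toWalk]; omega⟩
  have hqk : ∀ x ∈ q.support, x ∈ Set.Iio k := q.forall_mem_support_of_adj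
    (fun a b h => by have := wheel_adj_iff.1 h; simp only [Set.mem_Iio]; omega) hw
  obtain ⟨p, hp, hpl⟩ := h₁.exists_isPath h₂ hS (q.mapLe wheel_le_threadedWheel)
    (hq.mapLe _) (by simpa [Walk.support_mapLe_eq_support] using hqk)
  exact ⟨p, hp, by rw [Walk.length_mapLe] at hpl; omega⟩

theorem vertex_cases {x : ℕ} (hk : 5 ≤ k) (hx : x < k + t * (k - 3) + r) :
    x < k ∨ (∃ p < t, ∃ m, 0 < m ∧ m < k - 2 ∧ x = thread k p m) ∨ ∃ i < r, x = spike k t i := by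
  by_cases hxk : x < k
  · exact Or.inl hxk
  by_cases hxt : x < k + t * (k - 3)
  · have hmod := Nat.mod_lt (x - k) (show 0 < k - 3 by omega)
    have hdiv := Nat.div_add_mod' (x - k) (k - 3)
    refine Or.inr (Or.inl ⟨(x - k) / (k - 3), (Nat.div_lt_iff_lt_mul (by omega)).2 (by omega),
      (x - k) % (k - 3) + 1, by omega, by omega, ?_⟩)
    rw [thread, if_neg (by omega), if_neg (by omega)]
    omega
  · exact Or.inr (Or.inr ⟨x - (k + t * (k - 3)), by omega, by rw [spike]; omega⟩)

theorem exists_path_wheel_wheel {a b : ℕ} (hk : 5 ≤ k) (ha : a < k) (hb : b < k) (hab : a ≠ b) :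
    ∃ p : (threadedWheel k t r).Walk a b, p.IsPath ∧ p.length + 1 = k :=
  exists_path_of_hasExit hk (.refl _ ∅ a) (.refl _ ∅ b) (Set.disjoint_empty _) ha hb hab
    (Or.inl (by omega))

theorem exists_path_wheel_thread {a p m : ℕ} (hk : 5 ≤ k) (ha : a < k) (hp : p < t) (hm : 0 < m)
    (hmk : m < k - 2) :
    ∃ q : (threadedWheel k t r).Walk a (thread k p m), q.IsPath ∧ q.length + 1 = k := by
  by_cases ha1 : a = 1
  · exact exists_path_of_hasExit hk (.refl _ ∅ a) (hasExit_thread_up hk hp hm hmk.le)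
      (Set.empty_disjoint _) ha (by omega) (by omega) (Or.inl (by omega))
  · exact exists_path_of_hasExit hk (.refl _ ∅ a) (hasExit_thread_down hk hp hmk)
      (Set.empty_disjoint _) ha (by omega) ha1 (Or.inl (by omega))

theorem exists_path_wheel_spike {a i : ℕ} (hk : 5 ≤ k) (hr : r ≤ k) (ha : a < k) (hi : i < r)
    (hnadj : ¬(threadedWheel k t r).Adj a (spike k t i)) :
    ∃ q : (threadedWheel k t r).Walk a (spike k t i), q.IsPath ∧ q.length + 1 = k := by
  have hai : a ≠ i := by rintro rfl; exact hnadj (threadedWheel_adj_spike (by omega) hi)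
  exact exists_path_of_hasExit hk (.refl _ ∅ a) (hasExit_spike (by omega) hi)
    (Set.empty_disjoint _) ha (by omega) hai (Or.inl (by omega))

theorem exists_path_thread_thread {p p' m m' : ℕ} (hk : 5 ≤ k) (hp : p < t) (hp' : p' < t)
    (hm : 0 < m) (hmm' : m ≤ m') (hm' : m' < k - 2) (hne : thread k p m ≠ thread k p' m') :
    ∃ q : (threadedWheel k t r).Walk (thread k p m) (thread k p' m'),
      q.IsPath ∧ q.length + 1 = k := by
  refine exists_path_of_hasExit hk (hasExit_thread_down hk hp (by omega))
    (hasExit_thread_up hk hp' (by omega) hm'.le) ?_ (by omega) (by omega) (by omega) ?_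
  · rw [Set.disjoint_left]
    rintro _ ⟨i, ⟨hi, him⟩, rfl⟩ ⟨j, ⟨hj, hjm⟩, h⟩
    obtain ⟨rfl, rfl⟩ := thread_inj (by omega) (by omega) (by omega) (by omega) h
    obtain rfl : m = m' := by omega
    exact hne rfl
  · exact hmm'.lt_or_eq.imp (fun _ => by omega) fun _ => ⟨by omega, wheel_adj_iff.2 (by omega)⟩

theorem disjoint_thread_spike {p i : ℕ} {s : Set ℕ} (hk : 5 ≤ k) (hp : p < t)
    (hs : s ⊆ thread k p '' Set.Ioo 0 (k - 2)) : Disjoint s {spike k t i} := by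
  refine Set.disjoint_singleton_right.2 fun h => ?_
  obtain ⟨j, ⟨hj, hjk⟩, he⟩ := hs h
  have := thread_lt hk hp (m := j) (by omega)
  rw [he, spike] at this
  omega

theorem exists_path_thread_spike {p m i : ℕ} (hk : 5 ≤ k) (hr : r ≤ k) (hp : p < t) (hm : 0 < m)
    (hmk : m < k - 2) (hi : i < r) :
    ∃ q : (threadedWheel k t r).Walk (thread k p m) (spike k t i), q.IsPath ∧ q.length + 1 = k := by
  have hdown := hasExit_thread_down (r := r) hk hp hmk
  have hup := hasExit_thread_up (r := r) hk hp hm hmk.le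
  have hsp := hasExit_spike (k := k) (t := t) (by omega) hi
  have hdown_disj : Disjoint (thread k p '' Set.Ioc 0 m) {spike k t i} :=
    disjoint_thread_spike hk hp (Set.image_mono fun j hj => ⟨hj.1, by grind⟩)
  have hup_disj : Disjoint (thread k p '' Set.Ico m (k - 2)) {spike k t i} :=
    disjoint_thread_spike hk hp (Set.image_mono fun j hj => ⟨by grind, hj.2⟩)
  by_cases hi2 : i = 2
  · refine exists_path_of_hasExit hk hdown hsp hdown_disj (by omega) (by omega) (by omega) ?_
    exact (Nat.lt_or_ge (m + 3) k).imp (fun _ => by omega)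
      fun _ => ⟨by omega, wheel_adj_iff.2 (by omega)⟩
  by_cases hup_ok : 2 ≤ m ∨ i = 1
  · refine exists_path_of_hasExit hk hup hsp hup_disj (by omega) (by omega) (Ne.symm hi2) ?_
    exact (Nat.lt_or_ge 1 m).imp (fun _ => by omega)
      fun _ => ⟨by omega, wheel_adj_iff.2 (by omega)⟩
  · exact exists_path_of_hasExit hk hdown hsp hdown_disj (by omega) (by omega) (by omega)
      (Or.inl (by omega))

theorem exists_path_spike_spike {i j : ℕ} (hk : 5 ≤ k) (hr : r ≤ k) (hi : i < r) (hj : j < r)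
    (hij : i ≠ j) :
    ∃ q : (threadedWheel k t r).Walk (spike k t i) (spike k t j), q.IsPath ∧ q.length + 1 = k :=
  exists_path_of_hasExit hk (hasExit_spike (by omega) hi) (hasExit_spike (by omega) hj)
    (by simp [spike, hij]) (by omega) (by omega) hij (Or.inl (by omega))

theorem exists_path {a b : ℕ} (hk : 5 ≤ k) (hr : r ≤ k) (ha : a < k + t * (k - 3) + r)
    (hb : b < k + t * (k - 3) + r) (hab : a ≠ b) (hnadj : ¬(threadedWheel k t r).Adj a b) :
    ∃ q : (threadedWheel k t r).Walk a b, q.IsPath ∧ q.length + 1 = k := by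
  have reverse : ∀ {x y}, (∃ q : (threadedWheel k t r).Walk x y, q.IsPath ∧ q.length + 1 = k) →
      ∃ q : (threadedWheel k t r).Walk y x, q.IsPath ∧ q.length + 1 = k :=
    fun ⟨q, hq, hl⟩ => ⟨q.reverse, hq.reverse, by simpa⟩
  rcases vertex_cases hk ha with ha | ⟨p, hp, m, hm, hmk, rfl⟩ | ⟨i, hi, rfl⟩ <;>
    rcases vertex_cases hk hb with hb | ⟨p', hp', m', hm', hmk', rfl⟩ | ⟨j, hj, rfl⟩
  · exact exists_path_wheel_wheel hk ha hb hab
  · exact exists_path_wheel_thread hk ha hp' hm' hmk'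
  · exact exists_path_wheel_spike hk hr ha hj hnadj
  · exact reverse (exists_path_wheel_thread hk hb hp hm hmk)
  · rcases le_total m m' with h | h
    · exact exists_path_thread_thread hk hp hp' hm h hmk' hab
    · exact reverse (exists_path_thread_thread hk hp' hp hm' h hmk hab.symm)
  · exact exists_path_thread_spike hk hr hp hm hmk hj
  · exact reverse (exists_path_wheel_spike hk hr hb hi fun h => hnadj h.symm)
  · exact reverse (exists_path_thread_spike hk hr hp' hm' hmk' hi)
  · exact exists_path_spike_spike hk hr hi hj fun h => hab (h ▸ rfl)

theorem lt_of_threadedWheel_adj {a b : ℕ} (hk : 5 ≤ k)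
    (h : (threadedWheel k t r).Adj a b) : a < k + t * (k - 3) + r := by
  have hE : ∀ e ∈ wheelEdges k ∪ threadEdges k t ∪ spikeEdges k t r,
      e.1 < k + t * (k - 3) + r ∧ e.2 < k + t * (k - 3) + r := by
    intro e he
    simp only [wheelEdges, threadEdges, spikeEdges, Finset.mem_union, Finset.mem_image,
      Finset.mem_Ioo, Finset.mem_singleton, Finset.mem_product, Finset.mem_range] at he
    rcases he with
      (((⟨x, hx, rfl⟩ | ⟨x, hx, rfl⟩) | rfl) | ⟨⟨p, m⟩, ⟨hp, hm⟩, rfl⟩) | ⟨i, hi, rfl⟩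
    · simp only; omega
    · simp only; omega
    · simp only; omega
    · simp only at hp hm ⊢
      exact ⟨(thread_lt hk hp (by omega)).trans_le (Nat.le_add_right _ _),
        (thread_lt hk hp (by omega)).trans_le (Nat.le_add_right _ _)⟩
    · simp only [spike]; omega
  rcases (graphOfPairs_adj.1 h).1 with h | h
  · exact (hE _ h).1
  · exact (hE _ h).2

theorem isCkSemisaturated_threadedWheel (hk : 5 ≤ k) (hr : r ≤ k) :
    IsCkSemisaturated k
      ((threadedWheel k t r).comap (Fin.val : Fin (k + t * (k - 3) + r) → ℕ)) :=
  isCkSemisaturated_comap Fin.val_injective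
    (fun a _ h => ⟨⟨a, lt_of_threadedWheel_adj hk h⟩, rfl⟩)
    fun _ _ ⟨a, ha⟩ ⟨b, hb⟩ hab hnadj =>
      exists_path hk hr (ha ▸ a.isLt) (hb ▸ b.isLt) hab hnadj

theorem ncard_edgeSet_threadedWheel_le (hk : 2 ≤ k) :
    (threadedWheel k t r).edgeSet.ncard ≤ 2 * (k - 1) + t * (k - 2) + r := by
  refine (ncard_edgeSet_graphOfPairs_le _).trans ?_
  have hW : (wheelEdges k).card ≤ (k - 1) + (k - 2) + 1 := by
    refine ((Finset.card_union_le _ _).trans (Nat.add_le_add ((Finset.card_union_le _ _).trans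
      (Nat.add_le_add Finset.card_image_le Finset.card_image_le))
        (Finset.card_singleton _).le)).trans ?_
    rw [Nat.card_Ioo, Nat.card_Ioo]
    omega
  have hT : (threadEdges k t).card ≤ t * (k - 2) :=
    Finset.card_image_le.trans (by simp)
  have hS : (spikeEdges k t r).card ≤ r := Finset.card_image_le.trans (by simp)
  have := Finset.card_union_le (wheelEdges k ∪ threadEdges k t) (spikeEdges k t r)
  have := Finset.card_union_le (wheelEdges k) (threadEdges k t)
  omega

end ThreadedWheel

theorem ssatNum_le_ncard {n k : ℕ} {G : SimpleGraph (Fin n)} (h : IsCkSemisaturated k G) :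
    ssatNum n k ≤ G.edgeSet.ncard :=
  Nat.sInf_le ⟨G, h, rfl⟩

theorem ssatNum_le_of_threadedWheel {k t r : ℕ} (hk : 5 ≤ k) (hr : r ≤ k) :
    ssatNum (k + t * (k - 3) + r) k ≤ 2 * (k - 1) + t * (k - 2) + r :=
  (ssatNum_le_ncard (ThreadedWheel.isCkSemisaturated_threadedWheel hk hr)).trans <|
    (ncard_edgeSet_comap_le Fin.val_injective (edgeSet_graphOfPairs_finite _)).trans
      (ThreadedWheel.ncard_edgeSet_threadedWheel_le (by omega))

theorem ssatNum_le {n k : ℕ} (hk : 5 ≤ k) (hn : k + 4 ≤ n) :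
    ssatNum n k ≤ n + (n - 7) / (k - 3) + k - 3 := by
  obtain ⟨t, r, rfl, hr4, hrk⟩ : ∃ t r, n = k + t * (k - 3) + r ∧ 4 ≤ r ∧ r ≤ k := by
    have := Nat.div_add_mod' (n - k - 4) (k - 3)
    have := Nat.mod_lt (n - k - 4) (show 0 < k - 3 by omega)
    exact ⟨(n - k - 4) / (k - 3), 4 + (n - k - 4) % (k - 3), by omega, by omega, by omega⟩
  have hdiv : t + 1 ≤ (k + t * (k - 3) + r - 7) / (k - 3) :=
    (Nat.le_div_iff_mul_le (by omega)).2 (by rw [Nat.succ_mul]; omega)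
  have hmul : t * (k - 2) = t * (k - 3) + t := by
    rw [show k - 2 = k - 3 + 1 by omega, Nat.mul_succ]
  have := ssatNum_le_of_threadedWheel (t := t) hk hrk
  omega

theorem stmt_19 :
    (∀ n k : ℕ, 5 ≤ k → k + 4 ≤ n →
      ssatNum n k ≤ n + (n - 7) / (k - 3) + k - 3) ∧
    (∀ n : ℕ, 10 ≤ n → ssatNum n 6 ≤ ⌈(4 * (n : ℚ)) / 3⌉₊) := by
  refine ⟨fun n k hk hn => ssatNum_le hk hn, fun n hn => ?_⟩
  refine (ssatNum_le (k := 6) (by norm_num) (by omega)).trans ?_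
  have : n + (n - 7) / 3 + 2 < ⌈(4 * (n : ℚ)) / 3⌉₊ :=
    Nat.lt_ceil.2 (by rw [lt_div_iff₀ (by norm_num)]; norm_cast; omega)
  omega
end
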